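/- arXiv:2506.20321 — 7 statements merged into one kernel-verified Lean document; each statement's English description precedes it below -/
import Mathlib

section
/- Any action θ of an E-unitary inverse semigroup S on an algebra A is compatible: for all s, t ∈ S with (s,t) in the minimum group congruence σ, the partial isomorphisms θ_s and θ_t agree on the intersection of their domains. -/
/-- An inverse monoid structure on a monoid `S`: every element `s` has a unique
generalized inverse `inv s`. -/
structure InverseMonoidStr (S : Type*) [Monoid S] where
  inv : S → S
  mul_inv_mul : ∀ s, s * inv s * s = s
  inv_mul_inv : ∀ s, inv s * s * inv s = inv s
  inv_unique : ∀ s t, s * t * s = s → t * s * t = t → t = inv s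

/-- The natural partial order of an inverse monoid: `s ≤ t` iff `s = f * t`
for some idempotent `f`. -/
def natLE {S : Type*} [Monoid S] (s t : S) : Prop := ∃ f : S, f * f = f ∧ s = f * t

/-- The minimum group congruence `σ` on an inverse monoid:
`(s, t) ∈ σ` iff there is `u` with `u ≤ s` and `u ≤ t`. -/
def sigmaRel {S : Type*} [Monoid S] (s t : S) : Prop := ∃ u : S, natLE u s ∧ natLE u t

/-- An inverse monoid is `E`-unitary if `e ≤ s` with `e` idempotent implies that
`s` is idempotent. -/
def EUnitary (S : Type*) [Monoid S] : Prop :=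
  ∀ u s : S, u * u = u → natLE u s → s * s = s

/-- A unital action `θ` of an inverse monoid `S` on a unital `K`-algebra `A`.
Each `θ s` is an algebra isomorphism from the unital ideal `1_{s⁻¹}A` onto the
unital ideal `1_s A`, where `1_s = e s` is a central idempotent of `A`; here the
partially defined map `θ_s` is encoded by the globally defined map
`a ↦ θ_s(1_{s⁻¹}·a)`, and `θ : S → I(A)` is a homomorphism of monoids with
`θ 1 = id`. -/
structure UnitalAction (K : Type*) [CommRing K] {S : Type*} [Monoid S]
    (I : InverseMonoidStr S) (A : Type*) [Ring A] [Algebra K A] where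
  θ : S → A → A
  e : S → A
  e_idem : ∀ s, e s * e s = e s
  e_central : ∀ s (a : A), e s * a = a * e s
  e_one : e 1 = 1
  theta_add : ∀ s (a b : A), θ s (a + b) = θ s a + θ s b
  theta_mul : ∀ s (a b : A), θ s (a * b) = θ s a * θ s b
  theta_smul : ∀ s (k : K) (a : A), θ s (k • a) = k • θ s a
  theta_dom : ∀ s (a : A), θ s (e (I.inv s) * a) = θ s a
  theta_ran : ∀ s (a : A), e s * θ s a = θ s a
  theta_comp : ∀ s t (a : A), θ (s * t) a = θ s (θ t a)
  theta_one : ∀ a : A, θ 1 a = a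
  theta_inv : ∀ s (a : A), θ (I.inv s) (θ s a) = e (I.inv s) * a
  theta_e : ∀ s, θ s 1 = e s

namespace UnitalAction

variable {K : Type*} [CommRing K] {S : Type*} [Monoid S] {I : InverseMonoidStr S}
  {A : Type*} [Ring A] [Algebra K A]

/-- An action `θ` of `S` on `A` is compatible if `θ_s` and `θ_t` agree on the
intersection `1_{s⁻¹}A ∩ 1_{t⁻¹}A` of their domains whenever `(s,t) ∈ σ`. -/
def Compatible (T : UnitalAction K I A) : Prop :=
  ∀ s t, sigmaRel s t → ∀ a : A, T.θ s (T.e (I.inv t) * a) = T.θ t (T.e (I.inv s) * a)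

/-- The `K`-submodule `D_g = Σ_{s ∈ g} 1_s A` of `A` attached to the σ-class of `t`. -/
def Dsub (T : UnitalAction K I A) (t : S) : Submodule K A :=
  Submodule.span K {x : A | ∃ s : S, ∃ a : A, sigmaRel s t ∧ x = T.e s * a}

/-- The `K`-module `L(A,θ,S) = ⊕_{s ∈ S} 1_s A δ_s` is carried by finitely supported
functions `S →₀ A`; its multiplication is `a δ_s · b δ_t = a θ_s(1_{s⁻¹} b) δ_{st}`. -/
noncomputable def lmul (T : UnitalAction K I A) (f g : S →₀ A) : S →₀ A :=
  f.sum fun s a => g.sum fun t b => Finsupp.single (s * t) (a * T.θ s b)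

/-- The carrier of `L(A,θ,S)` inside `S →₀ A`: functions whose value at `s`
lies in `1_s A`. -/
def LSet (T : UnitalAction K I A) : Set (S →₀ A) :=
  {f : S →₀ A | ∀ s, T.e s * f s = f s}

/-- The generating set `X = {a δ_s − a δ_t : a ∈ 1_s A, s ≤ t}` of the ideal `N`. -/
def XSet (T : UnitalAction K I A) : Set (S →₀ A) :=
  {x : S →₀ A | ∃ s t : S, ∃ a : A, natLE s t ∧ T.e s * a = a ∧
    x = Finsupp.single s a - Finsupp.single t a}

end UnitalAction

section AuxInverse

variable {S : Type*} [Monoid S] (I : InverseMonoidStr S)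
include I

lemma aux_inv_inv (s : S) : I.inv (I.inv s) = s :=
  (I.inv_unique (I.inv s) s (I.inv_mul_inv s) (I.mul_inv_mul s)).symm

lemma aux_idem_inv_mul (s : S) : (I.inv s * s) * (I.inv s * s) = I.inv s * s := by
  rw [mul_assoc, ← mul_assoc s, I.mul_inv_mul]

lemma aux_idem_mul_inv (s : S) : (s * I.inv s) * (s * I.inv s) = s * I.inv s := by
  rw [mul_assoc, ← mul_assoc (I.inv s), I.inv_mul_inv]

lemma aux_inv_idem {e : S} (he : e * e = e) : I.inv e = e :=
  (I.inv_unique e e (by rw [he, he]) (by rw [he, he])).symm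

lemma aux_idem_mul {e f : S} (he : e * e = e) (hf : f * f = f) :
    (e * f) * (e * f) = e * f := by
  set b := I.inv (e * f) with hb
  have he' : ∀ x : S, e * (e * x) = e * x := fun x => by rw [← mul_assoc, he]
  have hf' : ∀ x : S, f * (f * x) = f * x := fun x => by rw [← mul_assoc, hf]
  have h1 : (e * f) * b * (e * f) = e * f := I.mul_inv_mul (e * f)
  have h2 : b * (e * f) * b = b := I.inv_mul_inv (e * f)
  have key : f * b * e = b := by
    rw [hb]
    apply I.inv_unique (e * f) (f * b * e)
    · have h3 : (e * f) * (f * b * e) * (e * f) = (e * f) * b * (e * f) := by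
        simp only [mul_assoc, he', hf']
      rw [h3, h1]
    · have h3 : (f * b * e) * (e * f) * (f * b * e) = f * ((b * (e * f) * b) * e) := by
        simp only [mul_assoc, he', hf']
      rw [h3, h2, ← mul_assoc]
  have hbb : b * b = b := by
    conv_lhs => rw [← key]
    calc (f * b * e) * (f * b * e) = f * ((b * (e * f) * b) * e) := by
          simp only [mul_assoc]
      _ = f * (b * e) := by rw [h2]
      _ = b := by rw [← mul_assoc, key]
  have heq : e * f = b := by
    have := I.inv_unique b (e * f) h2 h1
    rw [this, aux_inv_idem I hbb]
  rw [heq, hbb]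

lemma aux_idem_comm {e f : S} (he : e * e = e) (hf : f * f = f) :
    e * f = f * e := by
  have he' : ∀ x : S, e * (e * x) = e * x := fun x => by rw [← mul_assoc, he]
  have hf' : ∀ x : S, f * (f * x) = f * x := fun x => by rw [← mul_assoc, hf]
  have hef := aux_idem_mul I he hf
  have hfe := aux_idem_mul I hf he
  have h1 : (e * f) * (f * e) * (e * f) = e * f := by
    have h3 : (e * f) * (f * e) * (e * f) = (e * f) * (e * f) := by
      simp only [mul_assoc, he', hf']
    rw [h3, hef]
  have h2 : (f * e) * (e * f) * (f * e) = f * e := by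
    have h3 : (f * e) * (e * f) * (f * e) = (f * e) * (f * e) := by
      simp only [mul_assoc, he', hf']
    rw [h3, hfe]
  have := I.inv_unique (e * f) (f * e) h1 h2
  rw [this, aux_inv_idem I hef]

lemma aux_inv_mul (a b : S) : I.inv (a * b) = I.inv b * I.inv a := by
  have hcomm : (b * I.inv b) * (I.inv a * a) = (I.inv a * a) * (b * I.inv b) :=
    aux_idem_comm I (aux_idem_mul_inv I b) (aux_idem_inv_mul I a)
  refine (I.inv_unique (a * b) (I.inv b * I.inv a) ?_ ?_).symm
  · calc (a * b) * (I.inv b * I.inv a) * (a * b)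
        = a * ((b * I.inv b) * (I.inv a * a)) * b := by simp only [mul_assoc]
      _ = a * ((I.inv a * a) * (b * I.inv b)) * b := by rw [hcomm]
      _ = (a * I.inv a * a) * (b * I.inv b * b) := by simp only [mul_assoc]
      _ = a * b := by rw [I.mul_inv_mul, I.mul_inv_mul]
  · calc (I.inv b * I.inv a) * (a * b) * (I.inv b * I.inv a)
        = I.inv b * ((I.inv a * a) * (b * I.inv b)) * I.inv a := by simp only [mul_assoc]
      _ = I.inv b * ((b * I.inv b) * (I.inv a * a)) * I.inv a := by rw [hcomm]
      _ = (I.inv b * b * I.inv b) * (I.inv a * a * I.inv a) := by simp only [mul_assoc]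
      _ = I.inv b * I.inv a := by rw [I.inv_mul_inv, I.inv_mul_inv]

lemma aux_natLE_mul {u s v t : S} (h1 : natLE u s) (h2 : natLE v t) :
    natLE (u * v) (s * t) := by
  obtain ⟨f, hf, hu⟩ := h1
  obtain ⟨g, hg, hv⟩ := h2
  have hsg : (s * g * I.inv s) * (s * g * I.inv s) = s * g * I.inv s := by
    have hcomm : g * (I.inv s * s) = (I.inv s * s) * g :=
      aux_idem_comm I hg (aux_idem_inv_mul I s)
    calc (s * g * I.inv s) * (s * g * I.inv s)
        = s * (g * (I.inv s * s)) * (g * I.inv s) := by simp only [mul_assoc]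
      _ = s * ((I.inv s * s) * g) * (g * I.inv s) := by rw [hcomm]
      _ = (s * I.inv s * s) * (g * (g * I.inv s)) := by simp only [mul_assoc]
      _ = s * (g * (g * I.inv s)) := by rw [I.mul_inv_mul]
      _ = s * g * I.inv s := by rw [← mul_assoc g, hg, mul_assoc]
  refine ⟨f * (s * g * I.inv s), aux_idem_mul I hf hsg, ?_⟩
  rw [hu, hv]
  have hcomm2 : g * (I.inv s * s) = (I.inv s * s) * g :=
    aux_idem_comm I hg (aux_idem_inv_mul I s)
  calc f * s * (g * t)
      = f * ((s * I.inv s * s) * (g * t)) := by rw [I.mul_inv_mul, mul_assoc]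
    _ = f * (s * (((I.inv s * s) * g) * t)) := by simp only [mul_assoc]
    _ = f * (s * ((g * (I.inv s * s)) * t)) := by rw [hcomm2]
    _ = f * (s * g * I.inv s) * (s * t) := by simp only [mul_assoc]

lemma aux_natLE_inv {u s : S} (h : natLE u s) : natLE (I.inv u) (I.inv s) := by
  obtain ⟨f, hf, hu⟩ := h
  have hcomm : f * (s * I.inv s) = (s * I.inv s) * f :=
    aux_idem_comm I hf (aux_idem_mul_inv I s)
  have hk : (I.inv s * f * s) * (I.inv s * f * s) = I.inv s * f * s := by
    calc (I.inv s * f * s) * (I.inv s * f * s)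
        = I.inv s * (f * (s * I.inv s)) * (f * s) := by simp only [mul_assoc]
      _ = I.inv s * ((s * I.inv s) * f) * (f * s) := by rw [hcomm]
      _ = (I.inv s * s * I.inv s) * (f * (f * s)) := by simp only [mul_assoc]
      _ = I.inv s * (f * (f * s)) := by rw [I.inv_mul_inv]
      _ = I.inv s * f * s := by rw [← mul_assoc f, hf, mul_assoc]
  refine ⟨I.inv s * f * s, hk, ?_⟩
  rw [hu, aux_inv_mul I f s, aux_inv_idem I hf]
  calc I.inv s * f = (I.inv s * s * I.inv s) * f := by rw [I.inv_mul_inv]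
    _ = I.inv s * ((s * I.inv s) * f) := by simp only [mul_assoc]
    _ = I.inv s * (f * (s * I.inv s)) := by rw [hcomm]
    _ = I.inv s * f * s * I.inv s := by simp only [mul_assoc]

lemma aux_key {s t : S} (hE : EUnitary S) (h : sigmaRel s t) :
    s * I.inv t * t = t * I.inv s * s := by
  obtain ⟨u, hus, hut⟩ := h
  have hf : (I.inv s * t) * (I.inv s * t) = I.inv s * t :=
    hE (I.inv u * u) _ (aux_idem_inv_mul I u) (aux_natLE_mul I (aux_natLE_inv I hus) hut)
  have hg : (s * I.inv t) * (s * I.inv t) = s * I.inv t :=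
    hE (u * I.inv u) _ (aux_idem_mul_inv I u) (aux_natLE_mul I hus (aux_natLE_inv I hut))
  have hfe : I.inv t * s = I.inv s * t := by
    have h1 : I.inv (I.inv s * t) = I.inv t * s := by
      rw [aux_inv_mul, aux_inv_inv]
    rw [← h1, aux_inv_idem I hf]
  have hge : t * I.inv s = s * I.inv t := by
    have h1 : I.inv (s * I.inv t) = t * I.inv s := by
      rw [aux_inv_mul, aux_inv_inv]
    rw [← h1, aux_inv_idem I hg]
  have hmid : s * (I.inv s * t) = t * (I.inv t * s) := by
    have hf' : (I.inv t * s) * (I.inv s * t) = I.inv s * t := by rw [hfe]; exact hf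
    have hcomm : (t * I.inv t) * (s * I.inv s) = (s * I.inv s) * (t * I.inv t) :=
      aux_idem_comm I (aux_idem_mul_inv I t) (aux_idem_mul_inv I s)
    calc s * (I.inv s * t)
        = (s * I.inv s) * ((t * I.inv t) * t) := by rw [I.mul_inv_mul, ← mul_assoc]
      _ = (t * I.inv t) * ((s * I.inv s) * t) := by
          rw [← mul_assoc, ← hcomm, mul_assoc]
      _ = t * ((I.inv t * s) * (I.inv s * t)) := by simp only [mul_assoc]
      _ = t * (I.inv s * t) := by rw [hf']
      _ = t * (I.inv t * s) := by rw [← hfe]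
  calc s * I.inv t * t
      = (t * I.inv s) * t := by rw [hge]
    _ = t * (I.inv s * t) := by rw [mul_assoc]
    _ = t * (I.inv t * s) := by rw [← hfe]
    _ = s * (I.inv s * t) := hmid.symm
    _ = s * (I.inv t * s) := by rw [← hfe]
    _ = (t * I.inv s) * s := by rw [← mul_assoc, hge]

end AuxInverse

/-- Any (unital) action `θ` of an `E`-unitary inverse monoid `S`
on an algebra `A` is compatible: whenever `(s,t)` lies in the minimum group congruence
`σ`, the partial isomorphisms `θ_s` and `θ_t` agree on the intersection
`1_{s⁻¹}A ∩ 1_{t⁻¹}A` of their domains. -/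
theorem eunitary_action_compatible {K : Type*} [CommRing K] {S : Type*} [Monoid S]
    (I : InverseMonoidStr S) {A : Type*} [Ring A] [Algebra K A]
    (T : UnitalAction K I A) (hE : EUnitary S) :
    T.Compatible := by
  intro s t hst a
  have key := aux_key I hE hst
  rw [← T.theta_inv t a, ← T.theta_inv s a, ← T.theta_comp, ← T.theta_comp,
    ← T.theta_comp, ← T.theta_comp, key]
end

section
/- Let θ be a compatible unital action of an inverse monoid S on a K-algebra A. For g ∈ G(S) = S/σ set D_g = Σ_{s∈g} 1_s A. Then the formula θ̃_g(Σ_{s∈g} a_{s⁻¹}) = Σ_{s∈g} θ_s(a_{s⁻¹}), with a_{s⁻¹} ∈ 1_{s⁻¹}A, gives a well-defined bijection θ̃_g : D_{g⁻¹} → D_g whose inverse is θ̃_{g⁻¹}. -/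
namespace StmtAux


variable {S : Type*} [Monoid S]

lemma inv_invI (I : InverseMonoidStr S) (s : S) : I.inv (I.inv s) = s :=
  (I.inv_unique (I.inv s) s (I.inv_mul_inv s) (I.mul_inv_mul s)).symm

lemma idem_invI (I : InverseMonoidStr S) {f : S} (hf : f * f = f) : I.inv f = f :=
  (I.inv_unique f f (by rw [hf, hf]) (by rw [hf, hf])).symm

lemma idem_mul (I : InverseMonoidStr S) {e f : S} (he : e * e = e) (hf : f * f = f) :
    (e * f) * (e * f) = e * f := by
  have he' : ∀ x : S, e * (e * x) = e * x := fun x => by rw [← mul_assoc, he]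
  have hf' : ∀ x : S, f * (f * x) = f * x := fun x => by rw [← mul_assoc, hf]
  have key1 : (e * f) * (f * I.inv (e * f) * e) * (e * f) = e * f := by
    have h := I.mul_inv_mul (e * f)
    simp only [mul_assoc] at h ⊢
    simp only [he', hf'] at h ⊢
    exact h
  have key2 : (f * I.inv (e * f) * e) * (e * f) * (f * I.inv (e * f) * e) = (f * I.inv (e * f) * e) := by
    have h := I.inv_mul_inv (e * f)
    simp only [mul_assoc] at h ⊢
    simp only [he', hf'] at h ⊢
    calc f * (I.inv (e*f) * (e * (f * (I.inv (e*f) * e))))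
        = f * ((I.inv (e*f) * (e * (f * I.inv (e*f)))) * e) := by
          simp only [mul_assoc]
      _ = f * (I.inv (e*f) * e) := by rw [h]
  have htid : (f * I.inv (e * f) * e) * (f * I.inv (e * f) * e) = (f * I.inv (e * f) * e) := by
    have h := I.inv_mul_inv (e * f)
    simp only [mul_assoc] at h ⊢
    calc f * (I.inv (e*f) * (e * (f * (I.inv (e*f) * e))))
        = f * ((I.inv (e*f) * (e * (f * I.inv (e*f)))) * e) := by
          simp only [mul_assoc]
      _ = f * (I.inv (e*f) * e) := by rw [h]
  have htinv : (f * I.inv (e * f) * e) = I.inv (e * f) := I.inv_unique (e * f) _ key1 key2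
  have hst : e * f = (f * I.inv (e * f) * e) :=
    calc e * f = I.inv (I.inv (e * f)) := (inv_invI I (e * f)).symm
      _ = I.inv (f * I.inv (e * f) * e) := congrArg I.inv htinv.symm
      _ = f * I.inv (e * f) * e := idem_invI I htid
  rw [hst]; exact htid

lemma idem_comm (I : InverseMonoidStr S) {e f : S} (he : e * e = e) (hf : f * f = f) :
    e * f = f * e := by
  have hef : (e * f) * (e * f) = e * f := idem_mul I he hf
  have he' : ∀ x : S, e * (e * x) = e * x := fun x => by rw [← mul_assoc, he]
  have hf' : ∀ x : S, f * (f * x) = f * x := fun x => by rw [← mul_assoc, hf]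
  have k1 : (e * f) * (f * e) * (e * f) = e * f := by
    simp only [mul_assoc, he', hf']
    simpa only [mul_assoc] using hef
  have k2 : (f * e) * (e * f) * (f * e) = f * e := by
    simp only [mul_assoc, he', hf']
    simpa only [mul_assoc] using idem_mul I hf he
  have h := I.inv_unique (e * f) (f * e) k1 k2
  rw [h, idem_invI I hef]

lemma inv_mulI (I : InverseMonoidStr S) (a b : S) :
    I.inv (a * b) = I.inv b * I.inv a := by
  have h1 : (b * I.inv b) * (b * I.inv b) = b * I.inv b := by
    calc b * I.inv b * (b * I.inv b) = (b * I.inv b * b) * I.inv b := by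
          simp only [mul_assoc]
      _ = b * I.inv b := by rw [I.mul_inv_mul]
  have h2 : (I.inv a * a) * (I.inv a * a) = I.inv a * a := by
    calc I.inv a * a * (I.inv a * a) = (I.inv a * a * I.inv a) * a := by
          simp only [mul_assoc]
      _ = I.inv a * a := by rw [I.inv_mul_inv]
  have hab : (b * I.inv b) * (I.inv a * a) = (I.inv a * a) * (b * I.inv b) :=
    idem_comm I h1 h2
  refine (I.inv_unique (a * b) (I.inv b * I.inv a) ?_ ?_).symm
  · calc a * b * (I.inv b * I.inv a) * (a * b)
        = a * ((b * I.inv b) * (I.inv a * a)) * b := by simp only [mul_assoc]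
      _ = a * ((I.inv a * a) * (b * I.inv b)) * b := by rw [hab]
      _ = (a * I.inv a * a) * (b * I.inv b * b) := by simp only [mul_assoc]
      _ = a * b := by rw [I.mul_inv_mul, I.mul_inv_mul]
  · calc I.inv b * I.inv a * (a * b) * (I.inv b * I.inv a)
        = I.inv b * ((I.inv a * a) * (b * I.inv b)) * I.inv a := by
          simp only [mul_assoc]
      _ = I.inv b * ((b * I.inv b) * (I.inv a * a)) * I.inv a := by rw [← hab]
      _ = (I.inv b * b * I.inv b) * (I.inv a * a * I.inv a) := by
          simp only [mul_assoc]
      _ = I.inv b * I.inv a := by rw [I.inv_mul_inv, I.inv_mul_inv]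

lemma sigma_refl (s : S) : sigmaRel s s :=
  ⟨s, ⟨1, one_mul 1, (one_mul s).symm⟩, ⟨1, one_mul 1, (one_mul s).symm⟩⟩

lemma sigma_symm {s t : S} (h : sigmaRel s t) : sigmaRel t s :=
  ⟨h.choose, h.choose_spec.2, h.choose_spec.1⟩

lemma sigma_trans (I : InverseMonoidStr S) {s t r : S} (h1 : sigmaRel s t)
    (h2 : sigmaRel t r) : sigmaRel s r := by
  obtain ⟨u, ⟨f, hf, hus⟩, ⟨f', hf', hut⟩⟩ := h1
  obtain ⟨v, ⟨g, hg, hvt⟩, ⟨g', hg', hvr⟩⟩ := h2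
  refine ⟨f' * (g * t), ⟨g * f, idem_mul I hg hf, ?_⟩, ⟨f' * g', idem_mul I hf' hg', ?_⟩⟩
  · calc f' * (g * t) = (f' * g) * t := by rw [mul_assoc]
      _ = (g * f') * t := by rw [idem_comm I hf' hg]
      _ = g * (f' * t) := by rw [mul_assoc]
      _ = g * (f * s) := by rw [← hut, hus]
      _ = g * f * s := by rw [mul_assoc]
  · calc f' * (g * t) = f' * (g' * r) := by rw [← hvt, hvr]
      _ = f' * g' * r := by rw [mul_assoc]

lemma natLE_inv (I : InverseMonoidStr S) {w r : S} (h : natLE w r) :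
    natLE (I.inv w) (I.inv r) := by
  obtain ⟨f, hf, hw⟩ := h
  have hq : (r * I.inv r) * (r * I.inv r) = r * I.inv r := by
    calc r * I.inv r * (r * I.inv r) = (r * I.inv r * r) * I.inv r := by
          simp only [mul_assoc]
      _ = r * I.inv r := by rw [I.mul_inv_mul]
  have hc : f * (r * I.inv r) = (r * I.inv r) * f := idem_comm I hf hq
  refine ⟨I.inv r * f * r, ?_, ?_⟩
  · calc I.inv r * f * r * (I.inv r * f * r)
        = I.inv r * (f * (r * I.inv r)) * (f * r) := by simp only [mul_assoc]
      _ = I.inv r * ((r * I.inv r) * f) * (f * r) := by rw [hc]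
      _ = (I.inv r * r * I.inv r) * ((f * f) * r) := by simp only [mul_assoc]
      _ = I.inv r * (f * r) := by rw [I.inv_mul_inv, hf]
      _ = I.inv r * f * r := by rw [mul_assoc]
  · calc I.inv w = I.inv (f * r) := by rw [hw]
      _ = I.inv r * I.inv f := inv_mulI I f r
      _ = I.inv r * f := by rw [idem_invI I hf]
      _ = (I.inv r * r * I.inv r) * f := by rw [I.inv_mul_inv]
      _ = I.inv r * ((r * I.inv r) * f) := by simp only [mul_assoc]
      _ = I.inv r * (f * (r * I.inv r)) := by rw [hc]
      _ = I.inv r * f * r * I.inv r := by simp only [mul_assoc]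

lemma sigma_invI (I : InverseMonoidStr S) {s t : S} (h : sigmaRel s t) :
    sigmaRel (I.inv s) (I.inv t) := by
  obtain ⟨u, hus, hut⟩ := h
  exact ⟨I.inv u, natLE_inv I hus, natLE_inv I hut⟩



lemma matrix_key {R : Type*} [Ring R] :
    ∀ (n : ℕ) (E : Fin n → Fin n → R) (b : Fin n → R),
      (∀ j k (x : R), E j k * x = x * E j k) →
      (∀ j k, E j k * E j k = E j k) →
      (∀ j k, E j k = E k j) →
      (∀ i j k, E i j * E j k = E i j * E i k) →
      (∀ j, E j j * b j = b j) →
      (∀ k, ∑ j, E j k * b j = 0) →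
      ∑ j, b j = 0 := by
  intro n
  induction n with
  | zero => intro E b _ _ _ _ _ _; simp
  | succ n ih =>
    intro E b hc hi hs hT hd hcol
    have hS : ∀ k : Fin (n+1), ∑ j : Fin n, E j.succ k * b j.succ = -(E 0 k * b 0) := by
      intro k
      have h := hcol k
      rw [Fin.sum_univ_succ] at h
      exact eq_neg_of_add_eq_zero_right h
    have ihres : ∑ j : Fin n, (1 - E j.succ 0) * b j.succ = 0 := by
      refine ih (fun j k => E j.succ k.succ) (fun j => (1 - E j.succ 0) * b j.succ)
        (fun j k x => hc _ _ x) (fun j k => hi _ _) (fun j k => hs _ _)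
        (fun i j k => hT _ _ _) ?_ ?_
      · intro j
        calc E j.succ j.succ * ((1 - E j.succ 0) * b j.succ)
            = (E j.succ j.succ * (1 - E j.succ 0)) * b j.succ := by rw [mul_assoc]
          _ = ((1 - E j.succ 0) * E j.succ j.succ) * b j.succ := by rw [hc]
          _ = (1 - E j.succ 0) * (E j.succ j.succ * b j.succ) := by rw [mul_assoc]
          _ = (1 - E j.succ 0) * b j.succ := by rw [hd]
      · intro k
        have e1 : ∀ j : Fin n, E j.succ k.succ * ((1 - E j.succ 0) * b j.succ)
            = E j.succ k.succ * b j.succ - E k.succ 0 * (E j.succ k.succ * b j.succ) := by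
          intro j
          have comm : E j.succ k.succ * E j.succ 0 = E k.succ 0 * (E j.succ k.succ) := by
            calc E j.succ k.succ * E j.succ 0 = E k.succ j.succ * E j.succ 0 := by
                  rw [hs j.succ k.succ]
              _ = E k.succ j.succ * E k.succ 0 := hT k.succ j.succ 0
              _ = E j.succ k.succ * E k.succ 0 := by rw [hs j.succ k.succ]
              _ = E k.succ 0 * E j.succ k.succ := by rw [hc]
          calc E j.succ k.succ * ((1 - E j.succ 0) * b j.succ)
              = E j.succ k.succ * (b j.succ - E j.succ 0 * b j.succ) := by
                rw [sub_mul, one_mul]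
            _ = E j.succ k.succ * b j.succ
                - (E j.succ k.succ * E j.succ 0) * b j.succ := by
                rw [mul_sub, mul_assoc]
            _ = E j.succ k.succ * b j.succ
                - E k.succ 0 * (E j.succ k.succ * b j.succ) := by
                rw [comm, mul_assoc]
        calc ∑ j : Fin n, E j.succ k.succ * ((1 - E j.succ 0) * b j.succ)
            = ∑ j : Fin n, (E j.succ k.succ * b j.succ
                - E k.succ 0 * (E j.succ k.succ * b j.succ)) := by
              exact Finset.sum_congr rfl (fun j _ => e1 j)
          _ = (∑ j : Fin n, E j.succ k.succ * b j.succ)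
                - E k.succ 0 * ∑ j : Fin n, E j.succ k.succ * b j.succ := by
              rw [Finset.sum_sub_distrib, Finset.mul_sum]
          _ = -(E 0 k.succ * b 0) - E k.succ 0 * -(E 0 k.succ * b 0) := by
              rw [hS k.succ]
          _ = -(E 0 k.succ * b 0) + (E k.succ 0 * E 0 k.succ) * b 0 := by
              rw [mul_neg, sub_neg_eq_add, mul_assoc]
          _ = -(E 0 k.succ * b 0) + (E 0 k.succ * E 0 k.succ) * b 0 := by
              rw [hs k.succ 0]
          _ = 0 := by rw [hi]; abel
    rw [Fin.sum_univ_succ]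
    have split : ∀ j : Fin n, b j.succ = E j.succ 0 * b j.succ + (1 - E j.succ 0) * b j.succ := by
      intro j; rw [sub_mul, one_mul]; abel
    calc b 0 + ∑ j : Fin n, b j.succ
        = b 0 + ∑ j : Fin n, (E j.succ 0 * b j.succ + (1 - E j.succ 0) * b j.succ) := by
          rw [← Finset.sum_congr rfl (fun j _ => (split j).symm)]
      _ = b 0 + ((∑ j : Fin n, E j.succ 0 * b j.succ)
            + ∑ j : Fin n, (1 - E j.succ 0) * b j.succ) := by
          rw [Finset.sum_add_distrib]
      _ = b 0 + (-(E 0 0 * b 0) + 0) := by rw [hS 0, ihres]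
      _ = b 0 + -(b 0) := by rw [hd 0, add_zero]
      _ = 0 := by abel


section Action

variable {K : Type*} [CommRing K] {S : Type*} [Monoid S] {I : InverseMonoidStr S}
  {A : Type*} [Ring A] [Algebra K A] (T : UnitalAction K I A)

/-- `θ s` as an additive monoid hom. -/
def thetaHom (s : S) : A →+ A := AddMonoidHom.mk' (T.θ s) (fun a b => T.theta_add s a b)

lemma theta_sum (s : S) {n : ℕ} (f : Fin n → A) :
    T.θ s (∑ j, f j) = ∑ j, T.θ s (f j) :=
  map_sum (thetaHom T s) f Finset.univ

lemma theta_zero (s : S) : T.θ s 0 = 0 := map_zero (thetaHom T s)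

lemma theta_neg (s : S) (a : A) : T.θ s (-a) = - T.θ s a := map_neg (thetaHom T s) a

lemma e_mulS (u v : S) : T.e (u * v) = T.θ u (T.e v) := by
  rw [← T.theta_e v, ← T.theta_comp, T.theta_e]

lemma sum_theta_zero (hcomp : T.Compatible) {n : ℕ} (t : S) (s : Fin n → S)
    (a : Fin n → A) (hσ : ∀ j, sigmaRel (s j) t)
    (ha : ∀ j, T.e (I.inv (s j)) * a j = a j) (h0 : ∑ j, a j = 0) :
    ∑ j, T.θ (s j) (a j) = 0 := by
  have hjk : ∀ j k, sigmaRel (s j) (s k) := fun j k =>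
    sigma_trans I (hσ j) (sigma_symm (hσ k))
  have hE : ∀ j k : Fin n, T.e (s j * I.inv (s k)) = T.θ (s j) (T.e (I.inv (s k))) :=
    fun j k => e_mulS T _ _
  have hsym : ∀ j k : Fin n, T.e (s j * I.inv (s k)) = T.e (s k * I.inv (s j)) := by
    intro j k
    rw [hE, hE]
    have h := hcomp (s j) (s k) (hjk j k) 1
    rwa [mul_one, mul_one] at h
  apply matrix_key n (fun j k => T.e (s j * I.inv (s k))) (fun j => T.θ (s j) (a j))
  · exact fun j k x => T.e_central _ x
  · exact fun j k => T.e_idem _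
  · exact hsym
  · intro i j k
    calc T.e (s i * I.inv (s j)) * T.e (s j * I.inv (s k))
        = T.θ (s j) (T.e (I.inv (s i))) * T.θ (s j) (T.e (I.inv (s k))) := by
          rw [hsym i j, hE j i, hE j k]
      _ = T.θ (s j) (T.e (I.inv (s i)) * T.e (I.inv (s k))) := (T.theta_mul _ _ _).symm
      _ = T.θ (s i) (T.e (I.inv (s j)) * T.e (I.inv (s k))) := hcomp (s j) (s i) (hjk j i) _
      _ = T.θ (s i) (T.e (I.inv (s j))) * T.θ (s i) (T.e (I.inv (s k))) := T.theta_mul _ _ _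
      _ = T.e (s i * I.inv (s j)) * T.e (s i * I.inv (s k)) := by rw [← hE, ← hE]
  · intro j
    rw [hE]
    have h1 : T.θ (s j) (T.e (I.inv (s j))) = T.e (s j) := by
      rw [← mul_one (T.e (I.inv (s j))), T.theta_dom, T.theta_e]
    rw [h1]
    exact T.theta_ran _ _
  · intro k
    have h1 : ∀ j, T.e (s j * I.inv (s k)) * T.θ (s j) (a j) = T.θ (s k) (a j) := by
      intro j
      rw [hE, ← T.theta_mul, hcomp (s j) (s k) (hjk j k) (a j), ha j]
    calc ∑ j, T.e (s j * I.inv (s k)) * T.θ (s j) (a j)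
        = ∑ j, T.θ (s k) (a j) := Finset.sum_congr rfl (fun j _ => h1 j)
      _ = T.θ (s k) (∑ j, a j) := (theta_sum T (s k) a).symm
      _ = 0 := by rw [h0, theta_zero]

lemma sum_theta_eq (hcomp : T.Compatible) {n m : ℕ} (t : S) (s : Fin n → S)
    (a : Fin n → A) (s' : Fin m → S) (a' : Fin m → A)
    (hσ : ∀ j, sigmaRel (s j) t) (hσ' : ∀ j, sigmaRel (s' j) t)
    (ha : ∀ j, T.e (I.inv (s j)) * a j = a j)
    (ha' : ∀ j, T.e (I.inv (s' j)) * a' j = a' j)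
    (h : ∑ j, a j = ∑ j, a' j) :
    ∑ j, T.θ (s j) (a j) = ∑ j, T.θ (s' j) (a' j) := by
  have key := sum_theta_zero T hcomp t (Fin.append s s')
      (Fin.append a (fun j => -(a' j))) ?_ ?_ ?_
  · rw [Fin.sum_univ_add] at key
    simp only [Fin.append_left, Fin.append_right] at key
    have key2 : (∑ j, T.θ (s j) (a j)) - ∑ j, T.θ (s' j) (a' j) = 0 := by
      rw [sub_eq_add_neg, ← Finset.sum_neg_distrib]
      rw [← key]
      congr 1
      exact Finset.sum_congr rfl (fun j _ => (theta_neg T (s' j) (a' j)).symm)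
    exact sub_eq_zero.mp key2
  · intro j
    refine Fin.addCases ?_ ?_ j
    · intro i; rw [Fin.append_left]; exact hσ i
    · intro i; rw [Fin.append_right]; exact hσ' i
  · intro j
    refine Fin.addCases ?_ ?_ j
    · intro i; simp only [Fin.append_left]; exact ha i
    · intro i; simp only [Fin.append_right]; rw [mul_neg, ha' i]
  · rw [Fin.sum_univ_add]
    simp only [Fin.append_left, Fin.append_right]
    rw [Finset.sum_neg_distrib, h]
    abel

/-- The specification of the induced map `θ̃`. -/
def ThetaSpec (t : S) (x y : A) : Prop :=
  ∃ n : ℕ, ∃ s : Fin n → S, ∃ a : Fin n → A,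
    (∀ j, sigmaRel (s j) t) ∧ (∀ j, T.e (I.inv (s j)) * a j = a j) ∧
    x = ∑ j, a j ∧ y = ∑ j, T.θ (s j) (a j)

open Classical in
/-- The induced map `θ̃`. -/
noncomputable def Theta (t : S) (x : A) : A :=
  if h : ∃ y, ThetaSpec T t x y then h.choose else 0

lemma Theta_eq (hcomp : T.Compatible) {t : S} {x y : A} (h : ThetaSpec T t x y) :
    Theta T t x = y := by
  have hex : ∃ y, ThetaSpec T t x y := ⟨y, h⟩
  rw [Theta, dif_pos hex]
  obtain ⟨n, s, a, hσ, ha, hx, hy⟩ := hex.choose_spec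
  obtain ⟨m, s', a', hσ', ha', hx', hy'⟩ := h
  rw [hy, hy']
  exact sum_theta_eq T hcomp t s a s' a' hσ hσ' ha ha' (hx.symm.trans hx')

lemma exists_decomp {u : S} {x : A} (hx : x ∈ T.Dsub u) :
    ∃ n : ℕ, ∃ s : Fin n → S, ∃ a : Fin n → A,
      (∀ j, sigmaRel (s j) u) ∧ (∀ j, T.e (s j) * a j = a j) ∧ x = ∑ j, a j := by
  refine Submodule.span_induction ?_ ?_ ?_ ?_ hx
  · rintro x ⟨s0, a0, hσ0, rfl⟩
    refine ⟨1, fun _ => s0, fun _ => T.e s0 * a0, fun _ => hσ0, fun _ => ?_, by simp⟩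
    rw [← mul_assoc, T.e_idem]
  · exact ⟨0, Fin.elim0, Fin.elim0, fun j => j.elim0, fun j => j.elim0, by simp⟩
  · rintro x y _ _ ⟨n, s, a, hσ, ha, rfl⟩ ⟨m, s', a', hσ', ha', rfl⟩
    refine ⟨n + m, Fin.append s s', Fin.append a a', ?_, ?_, ?_⟩
    · intro j
      refine Fin.addCases ?_ ?_ j
      · intro i; rw [Fin.append_left]; exact hσ i
      · intro i; rw [Fin.append_right]; exact hσ' i
    · intro j
      refine Fin.addCases ?_ ?_ j
      · intro i; simp only [Fin.append_left]; exact ha i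
      · intro i; simp only [Fin.append_right]; exact ha' i
    · rw [Fin.sum_univ_add]
      simp only [Fin.append_left, Fin.append_right]
  · rintro k x _ ⟨n, s, a, hσ, ha, rfl⟩
    refine ⟨n, s, fun j => k • a j, hσ, fun j => ?_, ?_⟩
    · rw [mul_smul_comm, ha j]
    · rw [Finset.smul_sum]

lemma Theta_bij (hcomp : T.Compatible) (t : S) (x : A) (hx : x ∈ T.Dsub (I.inv t)) :
    Theta T t x ∈ T.Dsub t ∧ Theta T (I.inv t) (Theta T t x) = x := by
  obtain ⟨n, s, a, hσ, ha, hxe⟩ := exists_decomp T hx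
  have hσ' : ∀ j, sigmaRel (I.inv (s j)) t := fun j => by
    have h := sigma_invI I (hσ j)
    rwa [inv_invI] at h
  have ha' : ∀ j, T.e (I.inv (I.inv (s j))) * a j = a j := fun j => by
    rw [inv_invI]; exact ha j
  have hspec : ThetaSpec T t x (∑ j, T.θ (I.inv (s j)) (a j)) :=
    ⟨n, fun j => I.inv (s j), a, hσ', ha', hxe, rfl⟩
  have hval := Theta_eq T hcomp hspec
  have hθinv : ∀ j, T.θ (s j) (T.θ (I.inv (s j)) (a j)) = a j := fun j => by
    have h := T.theta_inv (I.inv (s j)) (a j)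
    rw [inv_invI] at h
    rw [h]
    exact ha j
  constructor
  · rw [hval]
    refine Submodule.sum_mem _ (fun j _ => Submodule.subset_span ?_)
    exact ⟨I.inv (s j), T.θ (I.inv (s j)) (a j), hσ' j, (T.theta_ran _ _).symm⟩
  · rw [hval]
    have hspec2 : ThetaSpec T (I.inv t) (∑ j, T.θ (I.inv (s j)) (a j)) x :=
      ⟨n, s, fun j => T.θ (I.inv (s j)) (a j), hσ,
        fun j => T.theta_ran (I.inv (s j)) (a j),
        rfl, by rw [hxe]; exact (Finset.sum_congr rfl (fun j _ => hθinv j)).symm⟩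
    exact Theta_eq T hcomp hspec2

end Action

end StmtAux

/-- Let `θ` be a compatible unital action of an inverse monoid `S`
on a `K`-algebra `A`.  For a σ-class `g` (represented by `t ∈ S`) set
`D_g = Σ_{s ∈ g} 1_s A`.  Then the formula
`θ̃_g(Σ_{s∈g} a_{s⁻¹}) = Σ_{s∈g} θ_s(a_{s⁻¹})`, with `a_{s⁻¹} ∈ 1_{s⁻¹}A`, gives a
well-defined bijection `θ̃_g : D_{g⁻¹} → D_g` whose inverse is `θ̃_{g⁻¹}`. -/
theorem induced_partial_bijections {K : Type*} [CommRing K] {S : Type*} [Monoid S]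
    (I : InverseMonoidStr S) {A : Type*} [Ring A] [Algebra K A]
    (T : UnitalAction K I A) (hcomp : T.Compatible) :
    ∃ Θ : S → A → A, ∀ t : S,
      -- `Θ t` is given by the displayed formula on `D_{[t]⁻¹}` (well-definedness)
      (∀ (n : ℕ) (s : Fin n → S) (a : Fin n → A),
        (∀ j, sigmaRel (s j) t) → (∀ j, T.e (I.inv (s j)) * a j = a j) →
        Θ t (∑ j, a j) = ∑ j, T.θ (s j) (a j)) ∧
      -- `Θ t` maps `D_{[t]⁻¹}` to `D_{[t]}` bijectively, with inverse `Θ (t⁻¹)`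
      (∀ x ∈ T.Dsub (I.inv t), Θ t x ∈ T.Dsub t ∧ Θ (I.inv t) (Θ t x) = x) ∧
      (∀ y ∈ T.Dsub t, Θ (I.inv t) y ∈ T.Dsub (I.inv t) ∧ Θ t (Θ (I.inv t) y) = y) := by
  refine ⟨StmtAux.Theta T, fun t => ⟨?_, ?_, ?_⟩⟩
  · intro n s a hσ ha
    exact StmtAux.Theta_eq T hcomp ⟨n, s, a, hσ, ha, rfl, rfl⟩
  · intro x hx
    exact StmtAux.Theta_bij T hcomp t x hx
  · intro y hy
    have h := StmtAux.Theta_bij T hcomp (I.inv t) y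
      (by rwa [StmtAux.inv_invI I t])
    rwa [StmtAux.inv_invI I t] at h
end

section
/- Let θ be a compatible unital action of an inverse monoid S on a K-algebra A. Then the family {θ̃_g}_{g ∈ G(S)} with domains D_g = Σ_{s∈g} 1_s A is a partial action of the maximum group image G(S) on A; in particular θ̃_g ∘ θ̃_h ≤ θ̃_{gh} and θ̃_h(D_{h⁻¹} ∩ D_{h⁻¹g⁻¹}) = D_h ∩ D_{g⁻¹} for all g,h ∈ G(S). -/
/-!
For `x = Σ a_s` with `a_s ∈ 1_{s⁻¹}A` and `s` ranging over finitely many elements of the class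
`g`, the value `θ̃_g x` is `Σ θ_s(a_s)`. This is well defined because compatibility glues
finitely many `θ_{s_1}, …, θ_{s_n}`, `s_i ∈ g`, into one additive map
`Φ x = θ_{s_1}(1_{s_1⁻¹} x) + Φ'((1 - 1_{s_1⁻¹}) x)` that agrees with each `θ_{s_i}` on its
domain.

Every element of `D_g` has a central local unit in `D_g`, so `D_g ∩ D_h = D_g D_h` is spanned by
elements of some `1_s A ∩ 1_r A` with `s ∈ g`, `r ∈ h`. On these the partial action identities
are the action axioms of `θ`, and additivity of `θ̃_g` on `D_{g⁻¹}` does the rest. Finally `θ̃`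
only depends on the σ-class, so `θ̃_g θ̃_{g⁻¹} = θ̃_1 = id` on `D_g` turns the inclusion
`θ̃_g(D_{g⁻¹} ∩ D_h) ⊆ D_g ∩ D_{gh}` into an equality.
-/

namespace InverseMonoidStr

variable {S : Type*} [Monoid S]

theorem inv_idem (I : InverseMonoidStr S) {f : S} (hf : f * f = f) : I.inv f = f :=
  (I.inv_unique f f (by rw [hf, hf]) (by rw [hf, hf])).symm

theorem inv_inv (I : InverseMonoidStr S) (s : S) : I.inv (I.inv s) = s :=
  (I.inv_unique (I.inv s) s (I.inv_mul_inv s) (I.mul_inv_mul s)).symm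

theorem inv_one (I : InverseMonoidStr S) : I.inv (1 : S) = 1 := I.inv_idem (mul_one 1)

theorem mul_inv_idem (I : InverseMonoidStr S) (s : S) :
    (s * I.inv s) * (s * I.inv s) = s * I.inv s := by
  rw [← mul_assoc, I.mul_inv_mul]

theorem inv_mul_idem (I : InverseMonoidStr S) (s : S) :
    (I.inv s * s) * (I.inv s * s) = I.inv s * s := by
  rw [← mul_assoc, I.inv_mul_inv]

/-- The inverse `x` of `f * g` satisfies `g * x * f = x`, which makes `x`, hence `f * g`,
idempotent. -/
theorem idem_mul_idem (I : InverseMonoidStr S) {f g : S} (hf : f * f = f) (hg : g * g = g) :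
    (f * g) * (f * g) = f * g := by
  have hf' : ∀ z : S, f * (f * z) = f * z := fun z => by rw [← mul_assoc, hf]
  have hg' : ∀ z : S, g * (g * z) = g * z := fun z => by rw [← mul_assoc, hg]
  set x := I.inv (f * g)
  have h1 : (f * g) * x * (f * g) = f * g := I.mul_inv_mul (f * g)
  have h2 : x * (f * g) * x = x := I.inv_mul_inv (f * g)
  have hgxf : g * x * f = x := by
    refine I.inv_unique (f * g) (g * x * f) ?_ ?_
    · calc f * g * (g * x * f) * (f * g)
          = f * (g * (g * (x * (f * (f * g))))) := by simp only [mul_assoc]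
        _ = (f * g) * x * (f * g) := by rw [hg', hf']; simp only [mul_assoc]
        _ = f * g := h1
    · calc g * x * f * (f * g) * (g * x * f)
          = g * (x * (f * (f * (g * (g * (x * f)))))) := by simp only [mul_assoc]
        _ = g * ((x * (f * g) * x) * f) := by rw [hf', hg']; simp only [mul_assoc]
        _ = g * x * f := by rw [h2]; simp only [mul_assoc]
  have hxx : x * x = x := by
    calc x * x = (g * x * f) * (g * x * f) := by rw [hgxf]
    _ = g * ((x * (f * g) * x) * f) := by simp only [mul_assoc]
    _ = x := by rw [h2, ← mul_assoc, hgxf]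
  have hfg : f * g = x := by
    rw [I.inv_unique x (f * g) (by rw [h2]) (by rw [h1]), I.inv_idem hxx]
  rwa [← hfg] at hxx

theorem idem_comm (I : InverseMonoidStr S) {f g : S} (hf : f * f = f) (hg : g * g = g) :
    f * g = g * f := by
  have hf' : ∀ z : S, f * (f * z) = f * z := fun z => by rw [← mul_assoc, hf]
  have hg' : ∀ z : S, g * (g * z) = g * z := fun z => by rw [← mul_assoc, hg]
  have hgf_inv : g * f = I.inv (f * g) := by
    refine I.inv_unique (f * g) (g * f) ?_ ?_
    · calc f * g * (g * f) * (f * g) = f * (g * (g * (f * (f * g)))) := by simp only [mul_assoc]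
        _ = (f * g) * (f * g) := by rw [hg', hf']; simp only [mul_assoc]
        _ = f * g := I.idem_mul_idem hf hg
    · calc g * f * (f * g) * (g * f) = g * (f * (f * (g * (g * f)))) := by simp only [mul_assoc]
        _ = (g * f) * (g * f) := by rw [hf', hg']; simp only [mul_assoc]
        _ = g * f := I.idem_mul_idem hg hf
  rw [hgf_inv, I.inv_idem (I.idem_mul_idem hf hg)]

theorem mul_inv_rev (I : InverseMonoidStr S) (s t : S) : I.inv (s * t) = I.inv t * I.inv s := by
  have hc : (t * I.inv t) * (I.inv s * s) = (I.inv s * s) * (t * I.inv t) :=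
    I.idem_comm (I.mul_inv_idem t) (I.inv_mul_idem s)
  refine (I.inv_unique (s * t) (I.inv t * I.inv s) ?_ ?_).symm
  · calc s * t * (I.inv t * I.inv s) * (s * t)
        = s * (((t * I.inv t) * (I.inv s * s)) * t) := by simp only [mul_assoc]
      _ = (s * I.inv s * s) * (t * I.inv t * t) := by rw [hc]; simp only [mul_assoc]
      _ = s * t := by rw [I.mul_inv_mul, I.mul_inv_mul]
  · calc I.inv t * I.inv s * (s * t) * (I.inv t * I.inv s)
        = I.inv t * (((I.inv s * s) * (t * I.inv t)) * I.inv s) := by simp only [mul_assoc]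
      _ = (I.inv t * t * I.inv t) * (I.inv s * s * I.inv s) := by rw [← hc]; simp only [mul_assoc]
      _ = I.inv t * I.inv s := by rw [I.inv_mul_inv, I.inv_mul_inv]

end InverseMonoidStr

section NaturalOrder

variable {S : Type*} [Monoid S]

theorem natLE_refl (I : InverseMonoidStr S) (s : S) : natLE s s :=
  ⟨s * I.inv s, I.mul_inv_idem s, (I.mul_inv_mul s).symm⟩

theorem natLE_trans (I : InverseMonoidStr S) {a b c : S} (h₁ : natLE a b) (h₂ : natLE b c) :
    natLE a c := by
  obtain ⟨f, hf, rfl⟩ := h₁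
  obtain ⟨g, hg, rfl⟩ := h₂
  exact ⟨f * g, I.idem_mul_idem hf hg, by rw [mul_assoc]⟩

theorem natLE_mul_right {a b : S} (r : S) (h : natLE a b) : natLE (a * r) (b * r) := by
  obtain ⟨f, hf, rfl⟩ := h
  exact ⟨f, hf, by rw [mul_assoc]⟩

/-- `r * (f * b) = (r * f * r⁻¹) * (r * b)`, and `r * f * r⁻¹` is idempotent since `f`
commutes with `r⁻¹ * r`. -/
theorem natLE_mul_left (I : InverseMonoidStr S) {a b : S} (r : S) (h : natLE a b) :
    natLE (r * a) (r * b) := by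
  obtain ⟨f, hf, rfl⟩ := h
  have hc : f * (I.inv r * r) = (I.inv r * r) * f := I.idem_comm hf (I.inv_mul_idem r)
  have hrf : r * (f * (I.inv r * r)) = r * f := by
    rw [hc, ← mul_assoc, ← mul_assoc, I.mul_inv_mul]
  refine ⟨r * f * I.inv r, ?_, ?_⟩
  · calc r * f * I.inv r * (r * f * I.inv r) = r * (f * (I.inv r * r)) * (f * I.inv r) := by
          simp only [mul_assoc]
      _ = r * f * I.inv r := by rw [hrf, mul_assoc r f, ← mul_assoc f, hf, mul_assoc]
  · calc r * (f * b) = r * (f * (I.inv r * r)) * b := by rw [hrf, mul_assoc]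
      _ = r * f * I.inv r * (r * b) := by simp only [mul_assoc]

theorem natLE_common (I : InverseMonoidStr S) {a b s : S} (h₁ : natLE a s) (h₂ : natLE b s) :
    ∃ w, natLE w a ∧ natLE w b := by
  obtain ⟨f, hf, rfl⟩ := h₁
  obtain ⟨g, hg, rfl⟩ := h₂
  exact ⟨f * g * s, ⟨g, hg, by rw [I.idem_comm hf hg]; simp only [mul_assoc]⟩,
    ⟨f, hf, by simp only [mul_assoc]⟩⟩

theorem sigmaRel_refl (I : InverseMonoidStr S) (s : S) : sigmaRel s s :=
  ⟨s, natLE_refl I s, natLE_refl I s⟩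

theorem sigmaRel_symm {s t : S} (h : sigmaRel s t) : sigmaRel t s :=
  let ⟨u, hus, hut⟩ := h
  ⟨u, hut, hus⟩

theorem sigmaRel_trans (I : InverseMonoidStr S) {s t r : S} (h₁ : sigmaRel s t)
    (h₂ : sigmaRel t r) : sigmaRel s r := by
  obtain ⟨u, hus, hut⟩ := h₁
  obtain ⟨v, hvt, hvr⟩ := h₂
  obtain ⟨w, hwu, hwv⟩ := natLE_common I hut hvt
  exact ⟨w, natLE_trans I hwu hus, natLE_trans I hwv hvr⟩

theorem sigmaRel_mul (I : InverseMonoidStr S) {s t s' t' : S} (h : sigmaRel s t)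
    (h' : sigmaRel s' t') : sigmaRel (s * s') (t * t') := by
  obtain ⟨u, hus, hut⟩ := h
  obtain ⟨u', hus', hut'⟩ := h'
  exact sigmaRel_trans I ⟨s * u', natLE_mul_left I s hus', natLE_mul_left I s hut'⟩
    ⟨u * t', natLE_mul_right t' hus, natLE_mul_right t' hut⟩

theorem sigmaRel_one_of_idem (I : InverseMonoidStr S) {f : S} (hf : f * f = f) : sigmaRel f 1 :=
  ⟨f, natLE_refl I f, ⟨f, hf, (mul_one f).symm⟩⟩

theorem sigmaRel_idem_mul (I : InverseMonoidStr S) {f : S} (hf : f * f = f) (s : S) :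
    sigmaRel (f * s) s :=
  ⟨f * s, natLE_refl I _, ⟨f, hf, rfl⟩⟩

theorem sigmaRel_mul_idem (I : InverseMonoidStr S) {f : S} (hf : f * f = f) (s : S) :
    sigmaRel (s * f) s := by
  simpa only [mul_one] using sigmaRel_mul I (sigmaRel_refl I s) (sigmaRel_one_of_idem I hf)

/-- `s⁻¹ σ s⁻¹ t t⁻¹ σ s⁻¹ s t⁻¹ σ t⁻¹`, since idempotents are σ-equivalent to `1`. -/
theorem sigmaRel_inv (I : InverseMonoidStr S) {s t : S} (h : sigmaRel s t) :
    sigmaRel (I.inv s) (I.inv t) := by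
  have h₁ := sigmaRel_symm (sigmaRel_mul_idem I (I.mul_inv_idem t) (I.inv s))
  have h₂ := sigmaRel_mul I (sigmaRel_mul I (sigmaRel_refl I (I.inv s)) (sigmaRel_symm h))
    (sigmaRel_refl I (I.inv t))
  rw [← mul_assoc] at h₁
  exact sigmaRel_trans I h₁ (sigmaRel_trans I h₂ (sigmaRel_idem_mul I (I.inv_mul_idem s) _))

end NaturalOrder

namespace UnitalAction

section

variable (K : Type*) [CommSemiring K] {S A : Type*} [AddCommMonoid A] [Module K A]

noncomputable def repSum : (S →₀ A) →ₗ[K] A := Finsupp.lsum K fun _ => LinearMap.id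

@[simp]
theorem repSum_single (s : S) (a : A) : repSum K (Finsupp.single s a) = a :=
  Finsupp.lsum_single K _ s a

end

variable {K : Type*} [CommRing K] {S : Type*} [Monoid S] {I : InverseMonoidStr S}
  {A : Type*} [Ring A] [Algebra K A] (T : UnitalAction K I A)

@[simps]
def thetaLinear (s : S) : A →ₗ[K] A where
  toFun := T.θ s
  map_add' := T.theta_add s
  map_smul' := T.theta_smul s

theorem e_mem_center (s : S) : T.e s ∈ Subring.center A :=
  Subring.mem_center_iff.mpr fun a => (T.e_central s a).symm

theorem e_mul_theta {s r : S} {c : A} (hc : T.e r * c = c) :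
    T.e (s * r) * T.θ s c = T.θ s c := by
  have h : T.e (s * r) = T.θ s (T.e r) := by rw [← T.theta_e r, ← T.theta_comp, T.theta_e]
  rw [h, ← T.theta_mul, hc]

theorem theta_theta_inv (s : S) (a : A) : T.θ s (T.θ (I.inv s) a) = T.e s * a := by
  simpa only [I.inv_inv] using T.theta_inv (I.inv s) a

theorem mem_Dsub {s t : S} (h : sigmaRel s t) {x : A} (hx : T.e s * x = x) : x ∈ T.Dsub t :=
  Submodule.subset_span ⟨s, x, h, hx.symm⟩

theorem Dsub_congr {s t : S} (h : sigmaRel s t) : T.Dsub s = T.Dsub t := by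
  have key : ∀ {s t : S}, sigmaRel s t → T.Dsub s ≤ T.Dsub t := fun h =>
    Submodule.span_le.mpr fun _ ⟨r, a, hr, hx⟩ =>
      Submodule.subset_span ⟨r, a, sigmaRel_trans I hr h, hx⟩
  exact le_antisymm (key h) (key (sigmaRel_symm h))

theorem Dsub_one : T.Dsub 1 = ⊤ :=
  eq_top_iff.mpr fun x _ => T.mem_Dsub (sigmaRel_refl I 1) (by rw [T.e_one, one_mul])

theorem mul_mem_Dsub {t : S} {x : A} (hx : x ∈ T.Dsub t) (b : A) : x * b ∈ T.Dsub t := by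
  induction hx using Submodule.span_induction with
  | mem y hy =>
    obtain ⟨s, a, hs, rfl⟩ := hy
    exact Submodule.subset_span ⟨s, a * b, hs, mul_assoc _ _ _⟩
  | zero => simp
  | add x y _ _ hx hy => rw [add_mul]; exact add_mem hx hy
  | smul k x _ hx => rw [smul_mul_assoc]; exact Submodule.smul_mem _ k hx

theorem exists_central_local_unit {t : S} {x : A} (hx : x ∈ T.Dsub t) :
    ∃ ε ∈ Subring.center A, ε ∈ T.Dsub t ∧ ε * x = x := by
  induction hx using Submodule.span_induction with
  | mem y hy =>
    obtain ⟨s, a, hs, rfl⟩ := hy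
    exact ⟨T.e s, T.e_mem_center s, T.mem_Dsub hs (T.e_idem s),
      by rw [← mul_assoc, T.e_idem]⟩
  | zero => exact ⟨0, zero_mem _, zero_mem _, mul_zero 0⟩
  | add x y _ _ hx hy =>
    obtain ⟨ε₁, hc₁, hm₁, hx₁⟩ := hx
    obtain ⟨ε₂, hc₂, hm₂, hy₂⟩ := hy
    have hxε : ε₁ * ε₂ * x = ε₂ * x := by
      rw [← Subring.mem_center_iff.mp hc₁ ε₂, mul_assoc, hx₁]
    have hyε : ε₁ * ε₂ * y = ε₁ * y := by rw [mul_assoc, hy₂]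
    refine ⟨ε₁ + ε₂ - ε₁ * ε₂, sub_mem (add_mem hc₁ hc₂) (mul_mem hc₁ hc₂),
      sub_mem (add_mem hm₁ hm₂) (T.mul_mem_Dsub hm₁ ε₂), ?_⟩
    simp only [sub_mul, add_mul, mul_add, hxε, hyε, hx₁, hy₂]
    abel
  | smul k x _ hx =>
    obtain ⟨ε, hc, hm, hεx⟩ := hx
    exact ⟨ε, hc, hm, by rw [mul_smul_comm, hεx]⟩

theorem Dsub_inf_le_mul (g h : S) : T.Dsub g ⊓ T.Dsub h ≤ T.Dsub g * T.Dsub h := by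
  rintro x ⟨hg, hh⟩
  obtain ⟨ε, -, hε, hεx⟩ := T.exists_central_local_unit hg
  rw [← hεx]
  exact Submodule.mul_mem_mul hε hh

theorem Dsub_inf_induction {g h : S} {P : A → Prop}
    (gen : ∀ s r c, sigmaRel s g → sigmaRel r h → T.e s * c = c → T.e r * c = c → P c)
    (add : ∀ x ∈ T.Dsub g ⊓ T.Dsub h, ∀ y ∈ T.Dsub g ⊓ T.Dsub h, P x → P y →
      P (x + y))
    (smul : ∀ (k : K), ∀ x ∈ T.Dsub g ⊓ T.Dsub h, P x → P (k • x))
    {x : A} (hx : x ∈ T.Dsub g ⊓ T.Dsub h) : P x := by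
  have hmul := T.Dsub_inf_le_mul g h hx
  clear hx
  rw [Dsub, Dsub, Submodule.span_mul_span] at hmul
  suffices x ∈ T.Dsub g ⊓ T.Dsub h ∧ P x from this.2
  induction hmul using Submodule.span_induction with
  | mem c hc =>
    obtain ⟨_, ⟨s, a, hs, rfl⟩, _, ⟨r, b, hr, rfl⟩, rfl⟩ := hc
    have hsc : T.e s * (T.e s * a * (T.e r * b)) = T.e s * a * (T.e r * b) := by
      simp only [← mul_assoc, T.e_idem]
    have hrc : T.e r * (T.e s * a * (T.e r * b)) = T.e s * a * (T.e r * b) := by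
      rw [← mul_assoc, T.e_central r, mul_assoc, ← mul_assoc (T.e r), T.e_idem]
    exact ⟨⟨T.mem_Dsub hs hsc, T.mem_Dsub hr hrc⟩, gen s r _ hs hr hsc hrc⟩
  | zero =>
    exact ⟨zero_mem _,
      gen g h 0 (sigmaRel_refl I g) (sigmaRel_refl I h) (mul_zero _) (mul_zero _)⟩
  | add x y _ _ hx hy => exact ⟨add_mem hx.1 hy.1, add x hx.1 y hy.1 hx.2 hy.2⟩
  | smul k x _ hx => exact ⟨Submodule.smul_mem _ k hx.1, smul k x hx.1 hx.2⟩

noncomputable def repEval : (S →₀ A) →ₗ[K] A := Finsupp.lsum K T.thetaLinear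

@[simp]
theorem repEval_single (s : S) (a : A) : T.repEval (Finsupp.single s a) = T.θ s a :=
  Finsupp.lsum_single K _ s a

/-- `f` represents `Σ_s f s ∈ D_{[t]⁻¹}` with `f s ∈ 1_{s⁻¹}A` and `s ∈ [t]`; `θ̃_{[t]}` maps it
to `Σ_s θ_s (f s)`. -/
def domainReps (t : S) : Submodule K (S →₀ A) where
  carrier := {f | (∀ s ∈ f.support, sigmaRel s t) ∧ ∀ s, T.e (I.inv s) * f s = f s}
  add_mem' := by
    classical
    rintro f g ⟨hf, hf'⟩ ⟨hg, hg'⟩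
    refine ⟨fun s hs => ?_, fun s => by rw [Finsupp.add_apply, mul_add, hf', hg']⟩
    rcases Finset.mem_union.mp (Finsupp.support_add hs) with h | h
    exacts [hf s h, hg s h]
  zero_mem' := ⟨by simp, by simp⟩
  smul_mem' k f := by
    rintro ⟨hf, hf'⟩
    exact ⟨fun s hs => hf s (Finsupp.support_smul hs),
      fun s => by rw [Finsupp.smul_apply, mul_smul_comm, hf']⟩

theorem single_mem_domainReps {s t : S} (h : sigmaRel s t) {a : A} (ha : T.e (I.inv s) * a = a) :
    Finsupp.single s a ∈ T.domainReps t := by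
  classical
  refine ⟨fun r hr => ?_, fun r => ?_⟩
  · rwa [Finset.mem_singleton.mp (Finsupp.support_single_subset hr)]
  · rw [Finsupp.single_apply]
    split_ifs with hsr
    · rwa [← hsr]
    · exact mul_zero _

theorem domainReps_congr {s t : S} (h : sigmaRel s t) : T.domainReps s = T.domainReps t := by
  ext f
  exact ⟨fun ⟨hf, hf'⟩ => ⟨fun r hr => sigmaRel_trans I (hf r hr) h, hf'⟩,
    fun ⟨hf, hf'⟩ => ⟨fun r hr => sigmaRel_trans I (hf r hr) (sigmaRel_symm h), hf'⟩⟩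

theorem exists_repSum_eq {t : S} {x : A} (hx : x ∈ T.Dsub (I.inv t)) :
    ∃ f ∈ T.domainReps t, repSum K f = x := by
  suffices T.Dsub (I.inv t) ≤ (T.domainReps t).map (repSum K) from Submodule.mem_map.mp (this hx)
  refine Submodule.span_le.mpr ?_
  rintro _ ⟨s, a, hs, rfl⟩
  refine ⟨Finsupp.single (I.inv s) (T.e s * a), T.single_mem_domainReps ?_ ?_, ?_⟩
  · simpa only [I.inv_inv] using sigmaRel_inv I hs
  · rw [I.inv_inv, ← mul_assoc, T.e_idem]
  · exact repSum_single K _ _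

variable {T}

theorem exists_addMonoidHom_eq_theta (hc : T.Compatible) {t : S} (F : Finset S)
    (hF : ∀ s ∈ F, sigmaRel s t) :
    ∃ Φ : A →+ A, ∀ s ∈ F, ∀ a, T.e (I.inv s) * a = a → Φ a = T.θ s a := by
  classical
  induction F using Finset.induction_on with
  | empty => exact ⟨0, by simp⟩
  | insert s F _ ih =>
    obtain ⟨Φ, hΦ⟩ := ih fun r hr => hF r (Finset.mem_insert_of_mem hr)
    have hs := hF s (Finset.mem_insert_self s F)
    refine ⟨(T.thetaLinear s).toAddMonoidHom.comp (AddMonoidHom.mulLeft (T.e (I.inv s))) +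
      Φ.comp (AddMonoidHom.mulLeft (1 - T.e (I.inv s))), fun r hr a ha => ?_⟩
    simp only [AddMonoidHom.add_apply, AddMonoidHom.comp_apply, AddMonoidHom.coe_mulLeft,
      LinearMap.toAddMonoidHom_coe, thetaLinear_apply]
    rcases Finset.mem_insert.mp hr with rfl | hr
    · rw [sub_mul, one_mul, ha, sub_self, map_zero, add_zero]
    · have hsr : sigmaRel s r :=
        sigmaRel_trans I hs (sigmaRel_symm (hF r (Finset.mem_insert_of_mem hr)))
      have hrest : Φ ((1 - T.e (I.inv s)) * a) = T.θ r a - T.θ r (T.e (I.inv s) * a) := by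
        rw [hΦ r hr _ (by rw [← mul_assoc, T.e_central, mul_assoc, ha]), sub_mul, one_mul]
        exact map_sub (T.thetaLinear r) a _
      have hglue : T.θ s (T.e (I.inv s) * a) = T.θ r (T.e (I.inv s) * a) := by
        rw [T.theta_dom, ← hc s r hsr a, ha]
      rw [hrest, hglue]
      abel

theorem repEval_eq_map_repSum {t : S} {f : S →₀ A} (hf : f ∈ T.domainReps t) (Φ : A →+ A)
    (hΦ : ∀ s ∈ f.support, ∀ a, T.e (I.inv s) * a = a → Φ a = T.θ s a) :
    T.repEval f = Φ (repSum K f) := by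
  rw [repEval, repSum, Finsupp.lsum_apply, Finsupp.lsum_apply, map_finsuppSum]
  exact Finsupp.sum_congr fun s hs => (hΦ s hs _ (hf.2 s)).symm

theorem repEval_eq_of_repSum_eq (hc : T.Compatible) {t : S} {f g : S →₀ A}
    (hf : f ∈ T.domainReps t) (hg : g ∈ T.domainReps t) (h : repSum K f = repSum K g) :
    T.repEval f = T.repEval g := by
  classical
  obtain ⟨Φ, hΦ⟩ := exists_addMonoidHom_eq_theta hc (f.support ∪ g.support) fun s hs =>
    (Finset.mem_union.mp hs).elim (hf.1 s) (hg.1 s)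
  rw [repEval_eq_map_repSum hf Φ fun s hs => hΦ s (Finset.mem_union_left _ hs),
    repEval_eq_map_repSum hg Φ fun s hs => hΦ s (Finset.mem_union_right _ hs), h]

variable (T)

/-- `θ̃_{[t]}`, extended by `0` off `D_{[t]⁻¹}`. -/
noncomputable def thetaTilde (t : S) (x : A) : A :=
  open Classical in
  if h : ∃ f ∈ T.domainReps t, repSum K f = x then T.repEval h.choose else 0

variable {T}

theorem thetaTilde_repSum (hc : T.Compatible) {t : S} {f : S →₀ A} (hf : f ∈ T.domainReps t) :
    T.thetaTilde t (repSum K f) = T.repEval f := by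
  have h : ∃ g ∈ T.domainReps t, repSum K g = repSum K f := ⟨f, hf, rfl⟩
  rw [thetaTilde, dif_pos h]
  exact repEval_eq_of_repSum_eq hc h.choose_spec.1 hf h.choose_spec.2

theorem thetaTilde_sum (hc : T.Compatible) {t : S} {ι : Type*} [Fintype ι] (s : ι → S)
    (a : ι → A) (hs : ∀ j, sigmaRel (s j) t) (ha : ∀ j, T.e (I.inv (s j)) * a j = a j) :
    T.thetaTilde t (∑ j, a j) = ∑ j, T.θ (s j) (a j) := by
  have h := thetaTilde_repSum hc (Submodule.sum_mem (T.domainReps t) (t := Finset.univ)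
    fun j _ => T.single_mem_domainReps (hs j) (ha j))
  simpa only [map_sum, repSum_single, repEval_single] using h

theorem thetaTilde_of_mem (hc : T.Compatible) {s t : S} (h : sigmaRel s t) {a : A}
    (ha : T.e (I.inv s) * a = a) : T.thetaTilde t a = T.θ s a := by
  simpa only [repSum_single, repEval_single] using
    thetaTilde_repSum hc (T.single_mem_domainReps h ha)

theorem thetaTilde_add (hc : T.Compatible) {t : S} {x y : A} (hx : x ∈ T.Dsub (I.inv t))
    (hy : y ∈ T.Dsub (I.inv t)) :
    T.thetaTilde t (x + y) = T.thetaTilde t x + T.thetaTilde t y := by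
  obtain ⟨f, hf, rfl⟩ := T.exists_repSum_eq hx
  obtain ⟨g, hg, rfl⟩ := T.exists_repSum_eq hy
  rw [← map_add, thetaTilde_repSum hc (add_mem hf hg), thetaTilde_repSum hc hf,
    thetaTilde_repSum hc hg, map_add]

theorem thetaTilde_smul (hc : T.Compatible) {t : S} (k : K) {x : A} (hx : x ∈ T.Dsub (I.inv t)) :
    T.thetaTilde t (k • x) = k • T.thetaTilde t x := by
  obtain ⟨f, hf, rfl⟩ := T.exists_repSum_eq hx
  rw [← map_smul, thetaTilde_repSum hc (Submodule.smul_mem _ k hf), thetaTilde_repSum hc hf,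
    map_smul]

theorem thetaTilde_congr {s t : S} (h : sigmaRel s t) : T.thetaTilde s = T.thetaTilde t := by
  unfold thetaTilde
  rw [T.domainReps_congr h]

theorem thetaTilde_one (hc : T.Compatible) (x : A) : T.thetaTilde 1 x = x := by
  rw [thetaTilde_of_mem hc (sigmaRel_refl I 1) (by rw [I.inv_one, T.e_one, one_mul]), T.theta_one]

theorem thetaTilde_mem_inf (hc : T.Compatible) {u w : S} {x : A}
    (hx : x ∈ T.Dsub (I.inv u) ⊓ T.Dsub w) :
    T.thetaTilde u x ∈ T.Dsub u ⊓ T.Dsub (u * w) := by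
  refine T.Dsub_inf_induction (P := fun x => T.thetaTilde u x ∈ T.Dsub u ⊓ T.Dsub (u * w))
    (fun s r c hs hr hsc hrc => ?_) (fun x hx y hy hx' hy' => ?_) (fun k x hx hx' => ?_) hx
  · have hs' : sigmaRel (I.inv s) u := by simpa only [I.inv_inv] using sigmaRel_inv I hs
    rw [thetaTilde_of_mem hc hs' (by rwa [I.inv_inv])]
    exact ⟨T.mem_Dsub hs' (T.theta_ran _ _),
      T.mem_Dsub (sigmaRel_mul I hs' hr) (T.e_mul_theta hrc)⟩
  · rw [thetaTilde_add hc hx.1 hy.1]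
    exact add_mem hx' hy'
  · rw [thetaTilde_smul hc k hx.1]
    exact Submodule.smul_mem _ k hx'

theorem thetaTilde_thetaTilde (hc : T.Compatible) {u v : S} {x : A}
    (hx : x ∈ T.Dsub (I.inv v) ⊓ T.Dsub (I.inv (u * v))) :
    T.thetaTilde u (T.thetaTilde v x) = T.thetaTilde (u * v) x := by
  have hmem : ∀ y ∈ T.Dsub (I.inv v) ⊓ T.Dsub (I.inv (u * v)),
      T.thetaTilde v y ∈ T.Dsub (I.inv u) := fun y hy => by
    have h := (thetaTilde_mem_inf hc hy).2
    rwa [I.mul_inv_rev, ← mul_assoc, T.Dsub_congr (sigmaRel_idem_mul I (I.mul_inv_idem v) _)] at h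
  refine T.Dsub_inf_induction
    (P := fun x => T.thetaTilde u (T.thetaTilde v x) = T.thetaTilde (u * v) x)
    (fun s r c hs hr hsc hrc => ?_) (fun x hx y hy hx' hy' => ?_) (fun k x hx hx' => ?_) hx
  · have hs' : sigmaRel (I.inv s) v := by simpa only [I.inv_inv] using sigmaRel_inv I hs
    have hr' : sigmaRel (I.inv r) (u * v) := by simpa only [I.inv_inv] using sigmaRel_inv I hr
    have hrs : sigmaRel (I.inv r * s) u := by
      refine sigmaRel_trans I (sigmaRel_mul I hr' hs) ?_
      rw [mul_assoc]
      exact sigmaRel_mul_idem I (I.mul_inv_idem v) u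
    rw [thetaTilde_of_mem hc hs' (by rwa [I.inv_inv]),
      thetaTilde_of_mem hc hr' (by rwa [I.inv_inv]),
      thetaTilde_of_mem hc hrs (by rw [I.mul_inv_rev, I.inv_inv]; exact T.e_mul_theta hrc),
      T.theta_comp, T.theta_theta_inv, hsc]
  · rw [thetaTilde_add hc hx.1 hy.1, thetaTilde_add hc (hmem x hx) (hmem y hy),
      thetaTilde_add hc hx.2 hy.2, hx', hy']
  · rw [thetaTilde_smul hc k hx.1, thetaTilde_smul hc k (hmem x hx), thetaTilde_smul hc k hx.2,
      hx']

theorem image_thetaTilde (hc : T.Compatible) (u w : S) :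
    T.thetaTilde u '' (T.Dsub (I.inv u) ⊓ T.Dsub w : Submodule K A)
      = (T.Dsub u ⊓ T.Dsub (u * w) : Submodule K A) := by
  refine Set.Subset.antisymm (Set.image_subset_iff.mpr fun x hx => thetaTilde_mem_inf hc hx)
    fun y hy => ⟨T.thetaTilde (I.inv u) y, ?_, ?_⟩
  · have h := thetaTilde_mem_inf hc (w := u * w) (by rwa [I.inv_inv])
    rwa [← mul_assoc, T.Dsub_congr (sigmaRel_idem_mul I (I.inv_mul_idem u) w)] at h
  · have hu := sigmaRel_one_of_idem I (I.mul_inv_idem u)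
    have hy' : y ∈ T.Dsub (I.inv (I.inv u)) ⊓ T.Dsub (I.inv (u * I.inv u)) := by
      rw [I.inv_inv, I.inv_idem (I.mul_inv_idem u), T.Dsub_congr hu, T.Dsub_one, inf_top_eq]
      exact hy.1
    rw [thetaTilde_thetaTilde hc hy', thetaTilde_congr hu, thetaTilde_one hc]

end UnitalAction

/-- Let `θ` be a compatible unital action of an inverse monoid `S`
on a `K`-algebra `A`.  Then the family `{θ̃_g}_{g ∈ G(S)}` (σ-classes represented by
elements of `S`) with domains `D_g = Σ_{s∈g} 1_s A` is a partial action of the maximum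
group image `G(S)` on `A`; in particular `θ̃_g ∘ θ̃_h ≤ θ̃_{gh}` and
`θ̃_h(D_{h⁻¹} ∩ D_{h⁻¹g⁻¹}) = D_h ∩ D_{g⁻¹}` for all `g, h ∈ G(S)`. -/
theorem induced_partial_action {K : Type*} [CommRing K] {S : Type*} [Monoid S]
    (I : InverseMonoidStr S) {A : Type*} [Ring A] [Algebra K A]
    (T : UnitalAction K I A) (hcomp : T.Compatible) :
    ∃ Θ : S → A → A,
      -- each `Θ t` is given by the defining formula of `θ̃_{[t]}`
      (∀ (t : S) (n : ℕ) (s : Fin n → S) (a : Fin n → A),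
        (∀ j, sigmaRel (s j) t) → (∀ j, T.e (I.inv (s j)) * a j = a j) →
        Θ t (∑ j, a j) = ∑ j, T.θ (s j) (a j)) ∧
      -- (i) `D_1 = A` and `θ̃_1 = id`
      (T.Dsub (1 : S) = ⊤) ∧ (∀ x : A, Θ 1 x = x) ∧
      -- (ii) `θ̃_g(D_{g⁻¹} ∩ D_h) = D_g ∩ D_{gh}`
      (∀ u w : S,
        (Θ u) '' ((T.Dsub (I.inv u) ⊓ T.Dsub w : Submodule K A) : Set A)
          = ((T.Dsub u ⊓ T.Dsub (u * w) : Submodule K A) : Set A)) ∧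
      -- (iii) `θ̃_g ∘ θ̃_h = θ̃_{gh}` on `D_{h⁻¹} ∩ D_{h⁻¹ g⁻¹}` (so `θ̃_g∘θ̃_h ≤ θ̃_{gh}`)
      (∀ u v : S, ∀ x ∈ T.Dsub (I.inv v) ⊓ T.Dsub (I.inv (u * v)),
        Θ u (Θ v x) = Θ (u * v) x) :=
  ⟨T.thetaTilde, fun _ _ s a hs ha => UnitalAction.thetaTilde_sum hcomp s a hs ha, T.Dsub_one,
    UnitalAction.thetaTilde_one hcomp, UnitalAction.image_thetaTilde hcomp,
    fun _ _ _ hx => UnitalAction.thetaTilde_thetaTilde hcomp hx⟩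
end

section
/- Let θ be a unital action of an inverse monoid S on an algebra A and let N be the ideal of L(A,θ,S) = ⊕_{s∈S} 1_s A δ_s generated by the set X = {a δ_s − a δ_t : a ∈ 1_s A, s ≤ t}. Then X is invariant under left and right multiplication by elements of L(A,θ,S), and hence N equals the K-linear span of X. -/
/-!
Multiplying `a δ_s - a δ_t` (with `s ≤ t`) on the left by `b δ_u` gives
`b θ_u(a) δ_{us} - b θ_u(a) δ_{ut}`, and `us ≤ ut`. On the right it gives
`a θ_s(b) δ_{su} - a θ_t(b) δ_{tu}`, where `a θ_s(b) = a θ_t(b)` because `θ_s` is the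
restriction of `θ_t` to `1_{s⁻¹} A`, and `su ≤ tu`. Multiplication by a fixed element of
`L(A,θ,S)` is `K`-linear, so the invariance of `X` under monomials `b δ_u` passes to its
span and to multiplication by arbitrary elements `Σ_u b_u δ_u`.
-/

namespace InverseMonoidStr

variable {S : Type*} [Monoid S]

theorem inv_eq_self_of_isIdempotentElem (I : InverseMonoidStr S) {f : S}
    (hf : IsIdempotentElem f) : I.inv f = f :=
  (I.inv_unique f f (by rw [hf.eq, hf.eq]) (by rw [hf.eq, hf.eq])).symm

theorem isIdempotentElem_inv_mul_self (I : InverseMonoidStr S) (s : S) :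
    IsIdempotentElem (I.inv s * s) := by
  rw [IsIdempotentElem, ← mul_assoc, I.inv_mul_inv]

/-- `f (ef)⁻¹ e` is also an inverse of `ef`, so `(ef)⁻¹` is idempotent, hence so is `ef`. -/
theorem isIdempotentElem_mul (I : InverseMonoidStr S) {e f : S} (he : IsIdempotentElem e)
    (hf : IsIdempotentElem f) : IsIdempotentElem (e * f) := by
  set x := I.inv (e * f)
  have h₁ : e * f * x * (e * f) = e * f := I.mul_inv_mul (e * f)
  have h₂ : x * (e * f) * x = x := I.inv_mul_inv (e * f)
  have hx : f * x * e = x := by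
    apply I.inv_unique
    · calc e * f * (f * x * e) * (e * f) = e * (f * f) * x * (e * e) * f := by
            simp only [mul_assoc]
        _ = e * f * x * (e * f) := by rw [hf.eq, he.eq]; simp only [mul_assoc]
        _ = e * f := h₁
    · calc f * x * e * (e * f) * (f * x * e) = f * (x * ((e * e) * (f * f)) * x) * e := by
            simp only [mul_assoc]
        _ = f * x * e := by rw [he.eq, hf.eq, h₂]
  have hxx : IsIdempotentElem x := by
    calc x * x = f * x * e * (f * x * e) := by rw [hx]
      _ = f * (x * (e * f) * x) * e := by simp only [mul_assoc]
      _ = x := by rw [h₂, hx]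
  have hinv : e * f = I.inv x := I.inv_unique x (e * f) h₂ h₁
  rw [IsIdempotentElem, hinv, I.inv_eq_self_of_isIdempotentElem hxx]
  exact hxx.eq

theorem commute_of_isIdempotentElem (I : InverseMonoidStr S) {e f : S}
    (he : IsIdempotentElem e) (hf : IsIdempotentElem f) : Commute e f := by
  have h₁ : e * f * (f * e) * (e * f) = e * f := by
    calc e * f * (f * e) * (e * f) = e * (f * f) * (e * e) * f := by simp only [mul_assoc]
      _ = e * f * (e * f) := by rw [hf.eq, he.eq]; simp only [mul_assoc]
      _ = e * f := (I.isIdempotentElem_mul he hf).eq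
  have h₂ : f * e * (e * f) * (f * e) = f * e := by
    calc f * e * (e * f) * (f * e) = f * (e * e) * (f * f) * e := by simp only [mul_assoc]
      _ = f * e * (f * e) := by rw [he.eq, hf.eq]; simp only [mul_assoc]
      _ = f * e := (I.isIdempotentElem_mul hf he).eq
  rw [Commute, SemiconjBy, I.inv_unique (e * f) (f * e) h₁ h₂,
    I.inv_eq_self_of_isIdempotentElem (I.isIdempotentElem_mul he hf)]

end InverseMonoidStr

theorem natLE.mul_right {S : Type*} [Monoid S] {s t : S} (h : natLE s t) (u : S) :
    natLE (s * u) (t * u) := by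
  obtain ⟨f, hf, rfl⟩ := h
  exact ⟨f, hf, mul_assoc f t u⟩

/-- If `s = f t` then `u s = (u f u⁻¹) (u t)`, since `f` commutes with `u⁻¹ u`. -/
theorem natLE.mul_left {S : Type*} [Monoid S] (I : InverseMonoidStr S) {s t : S}
    (h : natLE s t) (u : S) : natLE (u * s) (u * t) := by
  obtain ⟨f, hf, rfl⟩ := h
  have hcomm := I.commute_of_isIdempotentElem (I.isIdempotentElem_inv_mul_self u) hf
  refine ⟨u * f * I.inv u, ?_, ?_⟩
  · calc u * f * I.inv u * (u * f * I.inv u) = u * (f * (I.inv u * u)) * f * I.inv u := by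
          simp only [mul_assoc]
      _ = u * I.inv u * u * (f * f) * I.inv u := by rw [← hcomm.eq]; simp only [mul_assoc]
      _ = u * f * I.inv u := by rw [I.mul_inv_mul, hf]
  · calc u * (f * t) = u * I.inv u * u * f * t := by rw [I.mul_inv_mul]; simp only [mul_assoc]
      _ = u * (I.inv u * u * f) * t := by simp only [mul_assoc]
      _ = u * f * I.inv u * (u * t) := by rw [hcomm.eq]; simp only [mul_assoc]

namespace UnitalAction

variable {K : Type*} [CommRing K] {S : Type*} [Monoid S] {I : InverseMonoidStr S}
  {A : Type*} [Ring A] [Algebra K A] (T : UnitalAction K I A)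

def thetaₗ (s : S) : A →ₗ[K] A where
  toFun := T.θ s
  map_add' := T.theta_add s
  map_smul' := T.theta_smul s

theorem e_mul (s t : S) : T.e (s * t) = T.θ s (T.e t) := by
  rw [← T.theta_e, T.theta_comp, T.theta_e]

theorem e_mul_left_comm (s : S) (a b : A) : T.e s * (a * b) = a * (T.e s * b) := by
  rw [← mul_assoc, T.e_central, mul_assoc]

theorem theta_of_isIdempotentElem {f : S} (hf : IsIdempotentElem f) (a : A) :
    T.θ f a = T.e f * a := by
  have h := T.theta_inv f a
  rwa [I.inv_eq_self_of_isIdempotentElem hf, ← T.theta_comp, hf.eq] at h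

theorem e_mul_mul_theta {t : S} {a : A} (ha : T.e t * a = a) (s : S) :
    T.e (s * t) * T.θ s a = T.θ s a := by
  rw [e_mul, ← T.theta_mul, ha]

/-- For `s = f t`, `θ_s = 1_f θ_t`, and `1_f` is absorbed by `a ∈ 1_s A ⊆ 1_f A`. -/
theorem mul_theta_eq_of_natLE {s t : S} (h : natLE s t) {a : A} (ha : T.e s * a = a) (b : A) :
    a * T.θ s b = a * T.θ t b := by
  obtain ⟨f, hf, rfl⟩ := h
  have hes : T.e (f * t) = T.e f * T.e t := by rw [e_mul, T.theta_of_isIdempotentElem hf]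
  have haf : a * T.e f = a := by
    rw [← T.e_central, ← ha, hes, ← mul_assoc, ← mul_assoc, T.e_idem]
  rw [T.theta_comp, T.theta_of_isIdempotentElem hf, ← mul_assoc, haf]

theorem theta_zero (s : S) : T.θ s 0 = 0 :=
  (T.thetaₗ s).map_zero

theorem lmul_eq_sum_left (f g : S →₀ A) :
    T.lmul f g = f.sum fun u b => T.lmul (Finsupp.single u b) g := by
  refine Finsupp.sum_congr fun u _ => ?_
  rw [lmul, Finsupp.sum_single_index (by simp)]

theorem lmul_eq_sum_right (f g : S →₀ A) :
    T.lmul f g = g.sum fun u b => T.lmul f (Finsupp.single u b) := by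
  rw [lmul, Finsupp.sum_comm]
  refine Finsupp.sum_congr fun u _ => Finsupp.sum_congr fun s _ => ?_
  rw [Finsupp.sum_single_index (by simp [theta_zero])]

noncomputable def lmulLeft (u : S) (b : A) : (S →₀ A) →ₗ[K] (S →₀ A) :=
  Finsupp.lsum K fun t => Finsupp.lsingle (u * t) ∘ₗ LinearMap.mulLeft K b ∘ₗ T.thetaₗ u

noncomputable def lmulRight (u : S) (b : A) : (S →₀ A) →ₗ[K] (S →₀ A) :=
  Finsupp.lsum K fun s => Finsupp.lsingle (s * u) ∘ₗ LinearMap.mulRight K (T.θ s b)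

theorem lmulLeft_apply (u : S) (b : A) (z : S →₀ A) :
    T.lmulLeft u b z = T.lmul (Finsupp.single u b) z := by
  rw [lmul, Finsupp.sum_single_index (by simp)]
  rfl

theorem lmulRight_apply (u : S) (b : A) (z : S →₀ A) :
    T.lmulRight u b z = T.lmul z (Finsupp.single u b) := by
  refine Finsupp.sum_congr fun s _ => ?_
  rw [Finsupp.sum_single_index (by simp [theta_zero])]
  rfl

theorem lmulLeft_mem_XSet {x : S →₀ A} (hx : x ∈ T.XSet) (u : S) (b : A) :
    T.lmulLeft u b x ∈ T.XSet := by
  obtain ⟨s, t, a, hst, ha, rfl⟩ := hx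
  refine ⟨u * s, u * t, b * T.θ u a, hst.mul_left I u, ?_, ?_⟩
  · rw [e_mul_left_comm, T.e_mul_mul_theta ha]
  · rw [lmulLeft, map_sub, Finsupp.lsum_single, Finsupp.lsum_single]
    rfl

theorem lmulRight_mem_XSet {x : S →₀ A} (hx : x ∈ T.XSet) {u : S} {b : A}
    (hb : T.e u * b = b) : T.lmulRight u b x ∈ T.XSet := by
  obtain ⟨s, t, a, hst, ha, rfl⟩ := hx
  refine ⟨s * u, t * u, a * T.θ s b, hst.mul_right u, ?_, ?_⟩
  · rw [e_mul_left_comm, T.e_mul_mul_theta hb]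
  · rw [lmulRight, map_sub, Finsupp.lsum_single, Finsupp.lsum_single]
    simp only [LinearMap.coe_comp, Function.comp_apply, LinearMap.mulRight_apply,
      Finsupp.lsingle_apply, T.mul_theta_eq_of_natLE hst ha]

end UnitalAction

open UnitalAction in
/-- Let `θ` be a unital action of an inverse monoid `S` on an algebra
`A` and let `N` be the ideal of `L(A,θ,S) = ⊕_{s∈S} 1_s A δ_s` generated by the set
`X = {a δ_s − a δ_t : a ∈ 1_s A, s ≤ t}`.  Then `X` is invariant under left and right
multiplication by elements of `L(A,θ,S)`, and hence `N` equals the `K`-linear span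
of `X`. -/
theorem XSet_invariant_span {K : Type*} [CommRing K] {S : Type*} [Monoid S]
    (I : InverseMonoidStr S) {A : Type*} [Ring A] [Algebra K A]
    (T : UnitalAction K I A) :
    -- invariance of `X` under multiplication by elements `b δ_u` of `L(A,θ,S)`
    (∀ x ∈ T.XSet, ∀ (u : S) (b : A), T.e u * b = b →
      T.lmul (Finsupp.single u b) x ∈ T.XSet ∧ T.lmul x (Finsupp.single u b) ∈ T.XSet) ∧
    -- hence the `K`-span of `X` absorbs multiplication by `L(A,θ,S)`, i.e. it is
    -- the ideal `N` generated by `X`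
    (∀ y ∈ T.LSet, ∀ z ∈ Submodule.span K T.XSet,
      T.lmul y z ∈ Submodule.span K T.XSet ∧ T.lmul z y ∈ Submodule.span K T.XSet) := by
  refine ⟨fun x hx u b hb => ?_, fun y hy z hz => ⟨?_, ?_⟩⟩
  · rw [← T.lmulLeft_apply, ← T.lmulRight_apply]
    exact ⟨T.lmulLeft_mem_XSet hx u b, T.lmulRight_mem_XSet hx hb⟩
  · rw [T.lmul_eq_sum_left]
    refine Submodule.finsuppSum_mem K _ y _ fun u _ => ?_
    rw [← T.lmulLeft_apply]
    exact Submodule.mapsTo_span (fun x hx => T.lmulLeft_mem_XSet hx u (y u)) hz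
  · rw [T.lmul_eq_sum_right]
    refine Submodule.finsuppSum_mem K _ y _ fun u _ => ?_
    rw [← T.lmulRight_apply]
    exact Submodule.mapsTo_span (fun x hx => T.lmulRight_mem_XSet hx (hy u)) hz
end

section
/- Let θ be a unital action of an inverse monoid S on an algebra A over a commutative ring K and M an A⋊_θS-bimodule. Then the formula s · (a ⊗_{A^e} x) = (s·a) ⊗_{A^e} (s·x) defines a well-defined left KS-module structure on A ⊗_{A^e} M, where s·a = θ_s(1_{s⁻¹}a) and s·x = (1_s δ_s)·x·(1_{s⁻¹} δ_{s⁻¹}) in the crossed product. -/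
namespace UnitalAction

variable {K : Type*} [CommRing K] {S : Type*} [Monoid S] {I : InverseMonoidStr S}
  {A : Type*} [Ring A] [Algebra K A]

/-- A bimodule `M` over the crossed product `A⋊_θS = L(A,θ,S)/N`, encoded by a pair
of commuting unital left/right actions of `L(A,θ,S)` on the `K`-module `M` which
annihilate the ideal `N = span_K X` on both sides. -/
structure CrossedBimodule (T : UnitalAction K I A) (M : Type*)
    [AddCommGroup M] [Module K M] where
  l : (S →₀ A) → M → M
  r : (S →₀ A) → M → M
  l_add_left : ∀ (x y : S →₀ A) (m : M), l (x + y) m = l x m + l y m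
  l_add_right : ∀ (x : S →₀ A) (m m' : M), l x (m + m') = l x m + l x m'
  l_smul_left : ∀ (k : K) (x : S →₀ A) (m : M), l (k • x) m = k • l x m
  l_smul_right : ∀ (k : K) (x : S →₀ A) (m : M), l x (k • m) = k • l x m
  r_add_left : ∀ (x y : S →₀ A) (m : M), r (x + y) m = r x m + r y m
  r_add_right : ∀ (x : S →₀ A) (m m' : M), r x (m + m') = r x m + r x m'
  r_smul_left : ∀ (k : K) (x : S →₀ A) (m : M), r (k • x) m = k • r x m
  r_smul_right : ∀ (k : K) (x : S →₀ A) (m : M), r x (k • m) = k • r x m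
  l_mul : ∀ (x y : S →₀ A) (m : M), l (T.lmul x y) m = l x (l y m)
  r_mul : ∀ (x y : S →₀ A) (m : M), r (T.lmul x y) m = r y (r x m)
  l_one : ∀ m : M, l (Finsupp.single (1 : S) (1 : A)) m = m
  r_one : ∀ m : M, r (Finsupp.single (1 : S) (1 : A)) m = m
  lr_comm : ∀ (x y : S →₀ A) (m : M), l x (r y m) = r y (l x m)
  l_ann : ∀ x ∈ Submodule.span K T.XSet, ∀ m : M, l x m = 0
  r_ann : ∀ x ∈ Submodule.span K T.XSet, ∀ m : M, r x m = 0

variable {T : UnitalAction K I A} {M : Type*} [AddCommGroup M] [Module K M]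

/-- The left action of `A` on `M`, `a · m = (a δ_1 + N) · m`. -/
noncomputable def adL (B : CrossedBimodule T M) (a : A) (m : M) : M :=
  B.l (Finsupp.single (1 : S) a) m

/-- The right action of `A` on `M`, `m · a = m · (a δ_1 + N)`. -/
noncomputable def adR (B : CrossedBimodule T M) (a : A) (m : M) : M :=
  B.r (Finsupp.single (1 : S) a) m

/-- The left `S`-action on `M`: `s · m = (1_s δ_s) · m · (1_{s⁻¹} δ_{s⁻¹})`. -/
noncomputable def sdot (B : CrossedBimodule T M) (s : S) (m : M) : M :=
  B.r (Finsupp.single (I.inv s) (T.e (I.inv s))) (B.l (Finsupp.single s (T.e s)) m)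

/-- The relations submodule defining `A ⊗_{A^e} M` as a quotient of `A ⊗_K M`:
`x·(a ⊗ b) ⊗ m − x ⊗ (a ⊗ b)·m`, i.e. `(b x a) ⊗ m − x ⊗ (a·m·b)`. -/
noncomputable def relAe (B : CrossedBimodule T M) :
    Submodule K (TensorProduct K A M) :=
  Submodule.span K {z : TensorProduct K A M | ∃ (x a b : A) (m : M),
    z = ((b * x * a) ⊗ₜ[K] m) - (x ⊗ₜ[K] (adL B a (adR B b m)))}

end UnitalAction

section AuxMonoid

variable {S : Type*} [Monoid S]

lemma InverseMonoidStr.inv_of_idem (I : InverseMonoidStr S) {e : S} (he : e * e = e) :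
    I.inv e = e := by
  have h := I.inv_unique e e (by rw [he, he]) (by rw [he, he])
  exact h.symm

lemma InverseMonoidStr.mul_idem (I : InverseMonoidStr S) {e f : S} (he : e * e = e)
    (hf : f * f = f) : (e * f) * (e * f) = e * f := by
  have he' : ∀ z : S, e * (e * z) = e * z := fun z => by rw [← mul_assoc, he]
  have hf' : ∀ z : S, f * (f * z) = f * z := fun z => by rw [← mul_assoc, hf]
  set x := I.inv (e * f) with hx
  have h1 := I.mul_inv_mul (e * f)
  have h2 := I.inv_mul_inv (e * f)
  rw [← hx] at h1 h2
  have hg1 : (e * f) * (f * x * e) * (e * f) = e * f := by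
    calc (e * f) * (f * x * e) * (e * f) = (e * f) * x * (e * f) := by
          simp only [mul_assoc]; rw [hf', he']
      _ = e * f := h1
  have hg2 : (f * x * e) * (e * f) * (f * x * e) = f * x * e := by
    have h3 : f * (x * (e * f) * x) * e = f * x * e := by rw [h2]
    calc (f * x * e) * (e * f) * (f * x * e) = f * (x * (e * f) * x) * e := by
          simp only [mul_assoc]; rw [he', hf']
      _ = f * x * e := h3
  have hxg : f * x * e = x := by
    have h4 := I.inv_unique (e * f) (f * x * e) hg1 hg2
    rwa [← hx] at h4
  have hxidem : x * x = x := by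
    have h3 : f * (x * (e * f) * x) * e = f * x * e := by rw [h2]
    calc x * x = (f * x * e) * (f * x * e) := by rw [hxg]
      _ = f * (x * (e * f) * x) * e := by simp only [mul_assoc]
      _ = f * x * e := h3
      _ = x := hxg
  have hef : e * f = x := by
    have h4 := I.inv_unique x (e * f) h2 h1
    rwa [I.inv_of_idem hxidem] at h4
  rw [hef]; exact hxidem

lemma InverseMonoidStr.idem_comm_s15 (I : InverseMonoidStr S) {e f : S} (he : e * e = e)
    (hf : f * f = f) : e * f = f * e := by
  have he' : ∀ z : S, e * (e * z) = e * z := fun z => by rw [← mul_assoc, he]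
  have hf' : ∀ z : S, f * (f * z) = f * z := fun z => by rw [← mul_assoc, hf]
  have hefidem := I.mul_idem he hf
  have hfeidem := I.mul_idem hf he
  have hef' : e * (f * (e * f)) = e * f := by simpa only [mul_assoc] using hefidem
  have hfe' : f * (e * (f * e)) = f * e := by simpa only [mul_assoc] using hfeidem
  have h : f * e = I.inv (e * f) := by
    apply I.inv_unique
    · simp only [mul_assoc]; rw [hf', he']; exact hef'
    · simp only [mul_assoc]; rw [he', hf']; exact hfe'
  rw [I.inv_of_idem hefidem] at h
  exact h.symm

lemma InverseMonoidStr.idem_inv_mul (I : InverseMonoidStr S) (s : S) :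
    (I.inv s * s) * (I.inv s * s) = I.inv s * s := by
  have h := I.inv_mul_inv s
  calc (I.inv s * s) * (I.inv s * s) = (I.inv s * s * I.inv s) * s := by
        simp only [mul_assoc]
    _ = I.inv s * s := by rw [h]

lemma InverseMonoidStr.idem_mul_inv (I : InverseMonoidStr S) (s : S) :
    (s * I.inv s) * (s * I.inv s) = s * I.inv s := by
  have h := I.mul_inv_mul s
  calc (s * I.inv s) * (s * I.inv s) = (s * I.inv s * s) * I.inv s := by
        simp only [mul_assoc]
    _ = s * I.inv s := by rw [h]

lemma InverseMonoidStr.inv_mul_eq (I : InverseMonoidStr S) (s t : S) :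
    I.inv (s * t) = I.inv t * I.inv s := by
  symm
  apply I.inv_unique
  · have hcomm := I.idem_comm_s15 (I.idem_mul_inv t) (I.idem_inv_mul s)
    calc (s * t) * (I.inv t * I.inv s) * (s * t)
        = s * ((t * I.inv t) * (I.inv s * s)) * t := by simp only [mul_assoc]
      _ = s * ((I.inv s * s) * (t * I.inv t)) * t := by rw [hcomm]
      _ = (s * I.inv s * s) * (t * I.inv t * t) := by simp only [mul_assoc]
      _ = s * t := by rw [I.mul_inv_mul, I.mul_inv_mul]
  · have hcomm := I.idem_comm_s15 (I.idem_inv_mul s) (I.idem_mul_inv t)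
    calc (I.inv t * I.inv s) * (s * t) * (I.inv t * I.inv s)
        = I.inv t * ((I.inv s * s) * (t * I.inv t)) * I.inv s := by
          simp only [mul_assoc]
      _ = I.inv t * ((t * I.inv t) * (I.inv s * s)) * I.inv s := by rw [hcomm]
      _ = (I.inv t * t * I.inv t) * (I.inv s * s * I.inv s) := by
          simp only [mul_assoc]
      _ = I.inv t * I.inv s := by rw [I.inv_mul_inv, I.inv_mul_inv]

end AuxMonoid

namespace UnitalAction

variable {K : Type*} [CommRing K] {S : Type*} [Monoid S] {I : InverseMonoidStr S}
  {A : Type*} [Ring A] [Algebra K A]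

lemma theta_zero_s15 (T : UnitalAction K I A) (s : S) : T.θ s 0 = 0 := by
  have h : T.θ s 0 + T.θ s 0 = T.θ s 0 + 0 := by
    rw [← T.theta_add, add_zero, add_zero]
  exact add_left_cancel h

lemma theta_e_mul (T : UnitalAction K I A) (s t : S) :
    T.θ s (T.e t) = T.e (s * t) := by
  rw [← T.theta_e t, ← T.theta_comp, T.theta_e]

lemma lmul_single (T : UnitalAction K I A) (s t : S) (a b : A) :
    T.lmul (Finsupp.single s a) (Finsupp.single t b)
      = Finsupp.single (s * t) (a * T.θ s b) := by
  unfold lmul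
  rw [Finsupp.sum_single_index, Finsupp.sum_single_index]
  · rw [T.theta_zero_s15, mul_zero, Finsupp.single_zero]
  · rw [Finsupp.sum_single_index]
    · rw [zero_mul, Finsupp.single_zero]
    · rw [T.theta_zero_s15, mul_zero, Finsupp.single_zero]

variable {T : UnitalAction K I A} {M : Type*} [AddCommGroup M] [Module K M]

lemma l_comp (B : CrossedBimodule T M) (s t : S) (a b : A) (m : M) :
    B.l (Finsupp.single s a) (B.l (Finsupp.single t b) m)
      = B.l (Finsupp.single (s * t) (a * T.θ s b)) m := by
  rw [← T.lmul_single, B.l_mul]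

lemma r_comp (B : CrossedBimodule T M) (s t : S) (a b : A) (m : M) :
    B.r (Finsupp.single t b) (B.r (Finsupp.single s a) m)
      = B.r (Finsupp.single (s * t) (a * T.θ s b)) m := by
  rw [← T.lmul_single, B.r_mul]

lemma sdot_one (B : CrossedBimodule T M) (m : M) : sdot B 1 m = m := by
  unfold sdot
  have h1 : I.inv (1 : S) = 1 := I.inv_of_idem (by rw [one_mul])
  rw [h1, T.e_one, B.l_one, B.r_one]

lemma sdot_mul (B : CrossedBimodule T M) (s t : S) (m : M) :
    sdot B (s * t) m = sdot B s (sdot B t m) := by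
  unfold sdot
  rw [B.lr_comm, l_comp, r_comp]
  have h1 : T.e s * T.θ s (T.e t) = T.θ s (T.e t) := T.theta_ran s _
  have h2 : T.e (I.inv t) * T.θ (I.inv t) (T.e (I.inv s))
      = T.θ (I.inv t) (T.e (I.inv s)) := T.theta_ran _ _
  rw [h1, h2, T.theta_e_mul, T.theta_e_mul, I.inv_mul_eq]

lemma sdot_ad (B : CrossedBimodule T M) (s : S) (a b : A) (m : M) :
    sdot B s (adL B a (adR B b m))
      = adL B (T.θ s a) (adR B (T.θ s b) (sdot B s m)) := by
  unfold sdot adL adR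
  have key1 : ∀ m' : M, B.l (Finsupp.single s (T.e s)) (B.l (Finsupp.single 1 a) m')
      = B.l (Finsupp.single s (T.θ s a)) m' := by
    intro m'; rw [l_comp, mul_one, T.theta_ran]
  have key2 : ∀ m' : M, B.l (Finsupp.single 1 (T.θ s a)) (B.l (Finsupp.single s (T.e s)) m')
      = B.l (Finsupp.single s (T.θ s a)) m' := by
    intro m'; rw [l_comp, one_mul, T.theta_one, ← T.e_central, T.theta_ran]
  have key3 : ∀ m' : M, B.r (Finsupp.single (I.inv s) (T.e (I.inv s)))
        (B.r (Finsupp.single 1 b) m')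
      = B.r (Finsupp.single (I.inv s) (T.e (I.inv s) * b)) m' := by
    intro m'; rw [r_comp, one_mul, T.theta_one, ← T.e_central]
  have key4 : ∀ m' : M, B.r (Finsupp.single 1 (T.θ s b))
        (B.r (Finsupp.single (I.inv s) (T.e (I.inv s))) m')
      = B.r (Finsupp.single (I.inv s) (T.e (I.inv s) * b)) m' := by
    intro m'; rw [r_comp, mul_one, T.theta_inv, ← mul_assoc, T.e_idem]
  rw [B.lr_comm (Finsupp.single 1 a), B.lr_comm (Finsupp.single s (T.e s)),
    key1, key3, B.lr_comm (Finsupp.single 1 (T.θ s a)),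
    B.lr_comm (Finsupp.single 1 (T.θ s a)), key2, key4]

end UnitalAction

open UnitalAction in
/-- Let `θ` be a unital action of an inverse monoid `S` on an
algebra `A` over a commutative ring `K` and `M` an `A⋊_θS`-bimodule.  Then the formula
`s · (a ⊗_{A^e} x) = (s·a) ⊗_{A^e} (s·x)` defines a well-defined left `KS`-module
structure on `A ⊗_{A^e} M`, where `s·a = θ_s(1_{s⁻¹}a)` and
`s·x = (1_s δ_s)·x·(1_{s⁻¹} δ_{s⁻¹})` in the crossed product. -/
theorem diagonal_KS_module_structure {K : Type*} [CommRing K] {S : Type*} [Monoid S]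
    (I : InverseMonoidStr S) {A : Type*} [Ring A] [Algebra K A]
    (T : UnitalAction K I A) {M : Type*} [AddCommGroup M] [Module K M]
    (B : T.CrossedBimodule M) :
    ∃ act : S → ((TensorProduct K A M ⧸ relAe B) →ₗ[K] (TensorProduct K A M ⧸ relAe B)),
      -- the defining formula: `s·(a ⊗ x) = (s·a) ⊗ (s·x)` (in particular it is
      -- well defined on the quotient `A ⊗_{A^e} M`)
      (∀ (s : S) (a : A) (m : M),
        act s ((relAe B).mkQ (a ⊗ₜ[K] m))
          = (relAe B).mkQ ((T.θ s a) ⊗ₜ[K] (sdot B s m))) ∧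
      -- together with `K`-linearity this makes `A ⊗_{A^e} M` a left `KS`-module
      (∀ z, act 1 z = z) ∧
      (∀ (s t : S) (z), act (s * t) z = act s (act t z)) := by
  classical
  -- bilinear map (a, m) ↦ mkQ (θ s a ⊗ sdot s m)
  have sdot_add : ∀ (s : S) (m m' : M), sdot B s (m + m') = sdot B s m + sdot B s m' := by
    intro s m m'
    unfold sdot
    rw [B.l_add_right, B.r_add_right]
  have sdot_smul : ∀ (s : S) (k : K) (m : M), sdot B s (k • m) = k • sdot B s m := by
    intro s k m
    unfold sdot
    rw [B.l_smul_right, B.r_smul_right]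
  let bil : S → A →ₗ[K] M →ₗ[K] (TensorProduct K A M ⧸ relAe B) := fun s =>
    LinearMap.mk₂ K (fun a m => (relAe B).mkQ ((T.θ s a) ⊗ₜ[K] (sdot B s m)))
      (fun a a' m => by
        rw [T.theta_add, TensorProduct.add_tmul, map_add])
      (fun k a m => by
        rw [T.theta_smul, ← TensorProduct.smul_tmul', map_smul])
      (fun a m m' => by
        rw [sdot_add, TensorProduct.tmul_add, map_add])
      (fun a k m => by
        rw [sdot_smul, TensorProduct.tmul_smul, map_smul])
  let φ : S → TensorProduct K A M →ₗ[K] (TensorProduct K A M ⧸ relAe B) := fun s =>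
    TensorProduct.lift (bil s)
  have hφ : ∀ (s : S) (a : A) (m : M),
      φ s (a ⊗ₜ[K] m) = (relAe B).mkQ ((T.θ s a) ⊗ₜ[K] (sdot B s m)) := by
    intro s a m
    exact TensorProduct.lift.tmul a m
  have hker : ∀ s : S, relAe B ≤ LinearMap.ker (φ s) := by
    intro s
    refine Submodule.span_le.mpr ?_
    rintro z ⟨x, a, b, m, rfl⟩
    rw [SetLike.mem_coe, LinearMap.mem_ker, map_sub, hφ, hφ, sdot_ad, ← map_sub,
      T.theta_mul, T.theta_mul]
    rw [Submodule.mkQ_apply, Submodule.Quotient.mk_eq_zero]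
    apply Submodule.subset_span
    exact ⟨T.θ s x, T.θ s a, T.θ s b, sdot B s m, rfl⟩
  let act : S → ((TensorProduct K A M ⧸ relAe B) →ₗ[K] (TensorProduct K A M ⧸ relAe B)) :=
    fun s => Submodule.liftQ (relAe B) (φ s) (hker s)
  have hform : ∀ (s : S) (a : A) (m : M),
      act s ((relAe B).mkQ (a ⊗ₜ[K] m))
        = (relAe B).mkQ ((T.θ s a) ⊗ₜ[K] (sdot B s m)) := by
    intro s a m
    rw [Submodule.mkQ_apply]
    show Submodule.liftQ (relAe B) (φ s) (hker s) (Submodule.Quotient.mk (a ⊗ₜ[K] m)) = _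
    rw [Submodule.liftQ_apply, hφ]
  refine ⟨act, hform, ?_, ?_⟩
  · intro z
    obtain ⟨w, rfl⟩ := Submodule.Quotient.mk_surjective (relAe B) z
    rw [← Submodule.mkQ_apply]
    induction w using TensorProduct.induction_on with
    | zero => simp only [map_zero]
    | tmul a m => rw [hform, T.theta_one, sdot_one]
    | add u v hu hv => simp only [map_add, hu, hv]
  · intro s t z
    obtain ⟨w, rfl⟩ := Submodule.Quotient.mk_surjective (relAe B) z
    rw [← Submodule.mkQ_apply]
    induction w using TensorProduct.induction_on with
    | zero => simp only [map_zero]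
    | tmul a m => rw [hform, hform t, hform s, T.theta_comp, sdot_mul]
    | add u v hu hv => simp only [map_add, hu, hv]
end

section
/- Let θ be a unital action of an inverse monoid S on a K-algebra A and M an A⋊_θS-bimodule. Then the K-submodule [A,M] generated by {a·x − x·a : a ∈ A, x ∈ M} is a left KS-submodule of M, and the map x + [A,M] ↦ 1_A ⊗ x is a well-defined isomorphism of left KS-modules M/[A,M] ≅ A ⊗_{A^e} M. -/
section Aux

open UnitalAction

variable {K : Type*} [CommRing K] {S : Type*} [Monoid S] {I : InverseMonoidStr S}
  {A : Type*} [Ring A] [Algebra K A] {T : UnitalAction K I A}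
  {M : Type*} [AddCommGroup M] [Module K M] (B : T.CrossedBimodule M)

lemma aux_theta_zero (s : S) : T.θ s 0 = 0 := by
  have := T.theta_smul s 0 0
  simpa using this

lemma aux_lmul_single (s t : S) (a b : A) :
    T.lmul (Finsupp.single s a) (Finsupp.single t b)
      = Finsupp.single (s * t) (a * T.θ s b) := by
  classical
  unfold UnitalAction.lmul
  rw [Finsupp.sum_single_index, Finsupp.sum_single_index]
  · rw [aux_theta_zero, mul_zero, Finsupp.single_zero]
  · rw [Finsupp.sum_single_index] <;>
      simp [aux_theta_zero]

lemma aux_l_l (s t : S) (a b : A) (m : M) :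
    B.l (Finsupp.single s a) (B.l (Finsupp.single t b) m)
      = B.l (Finsupp.single (s * t) (a * T.θ s b)) m := by
  rw [← B.l_mul, aux_lmul_single]

lemma aux_r_r (s t : S) (a b : A) (m : M) :
    B.r (Finsupp.single t b) (B.r (Finsupp.single s a) m)
      = B.r (Finsupp.single (s * t) (a * T.θ s b)) m := by
  rw [← B.r_mul, aux_lmul_single]

lemma aux_adL_mul (a b : A) (m : M) :
    adL B a (adL B b m) = adL B (a * b) m := by
  unfold UnitalAction.adL
  rw [aux_l_l, one_mul, T.theta_one]

lemma aux_adR_mul (a b : A) (m : M) :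
    adR B b (adR B a m) = adR B (a * b) m := by
  unfold UnitalAction.adR
  rw [aux_r_r, one_mul, T.theta_one]

lemma aux_adL_one (m : M) : adL B 1 m = m := B.l_one m

lemma aux_adR_one (m : M) : adR B 1 m = m := B.r_one m

lemma aux_adL_adR (a b : A) (m : M) :
    adL B a (adR B b m) = adR B b (adL B a m) := B.lr_comm _ _ m

lemma aux_sdot_adL (s : S) (a : A) (m : M) :
    sdot B s (adL B a m) = adL B (T.θ s a) (sdot B s m) := by
  unfold UnitalAction.sdot UnitalAction.adL
  rw [B.lr_comm, aux_l_l, aux_l_l, T.theta_one, mul_one, one_mul, T.theta_ran,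
    ← T.e_central, T.theta_ran]

lemma aux_sdot_adR (s : S) (a : A) (m : M) :
    sdot B s (adR B a m) = adR B (T.θ s a) (sdot B s m) := by
  unfold UnitalAction.sdot UnitalAction.adR
  rw [B.lr_comm, aux_r_r, aux_r_r, T.theta_one, T.theta_inv, one_mul, mul_one,
    ← mul_assoc, T.e_idem, T.e_central]

lemma aux_adR_e_sdot (s : S) (m : M) :
    adR B (T.e s) (sdot B s m) = sdot B s m := by
  have h : T.θ (I.inv s) (T.e s) = T.e (I.inv s) := by
    rw [← T.theta_e s, T.theta_inv, mul_one]
  unfold UnitalAction.sdot UnitalAction.adR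
  rw [aux_r_r, h, T.e_idem, mul_one]

lemma aux_sdot_sub (s : S) (m m' : M) :
    sdot B s (m - m') = sdot B s m - sdot B s m' := by
  have hl : ∀ (x : S →₀ A) (u v : M), B.l x (u - v) = B.l x u - B.l x v := by
    intro x u v
    have h := B.l_add_right x (u - v) v
    rw [sub_add_cancel] at h
    rw [h]; abel
  have hr : ∀ (x : S →₀ A) (u v : M), B.r x (u - v) = B.r x u - B.r x v := by
    intro x u v
    have h := B.r_add_right x (u - v) v
    rw [sub_add_cancel] at h
    rw [h]; abel
  unfold UnitalAction.sdot
  rw [hl, hr]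

lemma aux_adL_add_left (a b : A) (m : M) :
    adL B (a + b) m = adL B a m + adL B b m := by
  unfold UnitalAction.adL
  rw [Finsupp.single_add, B.l_add_left]

lemma aux_adL_smul_left (k : K) (a : A) (m : M) :
    adL B (k • a) m = k • adL B a m := by
  unfold UnitalAction.adL
  rw [← Finsupp.smul_single, B.l_smul_left]

lemma aux_adL_add_right (a : A) (m m' : M) :
    adL B a (m + m') = adL B a m + adL B a m' := B.l_add_right _ m m'

lemma aux_adL_smul_right (a : A) (k : K) (m : M) :
    adL B a (k • m) = k • adL B a m := B.l_smul_right k _ m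

lemma aux_rel_gen1 (a : A) (m : M) :
    (a ⊗ₜ[K] m - (1 : A) ⊗ₜ[K] adL B a m) ∈ relAe B :=
  Submodule.subset_span ⟨1, a, 1, m, by rw [one_mul, one_mul, aux_adR_one]⟩

lemma aux_rel_gen2 (a : A) (m : M) :
    (a ⊗ₜ[K] m - (1 : A) ⊗ₜ[K] adR B a m) ∈ relAe B :=
  Submodule.subset_span ⟨1, 1, a, m, by rw [mul_one, mul_one, aux_adL_one]⟩

lemma aux_rel_comm (a : A) (m : M) :
    ((1 : A) ⊗ₜ[K] adL B a m - (1 : A) ⊗ₜ[K] adR B a m) ∈ relAe B := by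
  have h : (1 : A) ⊗ₜ[K] adL B a m - (1 : A) ⊗ₜ[K] adR B a m
      = (a ⊗ₜ[K] m - (1 : A) ⊗ₜ[K] adR B a m)
        - (a ⊗ₜ[K] m - (1 : A) ⊗ₜ[K] adL B a m) := by abel
  rw [h]
  exact sub_mem (aux_rel_gen2 B a m) (aux_rel_gen1 B a m)

end Aux

open UnitalAction in
/-- Let `θ` be a unital action of an inverse monoid `S` on a
`K`-algebra `A` and `M` an `A⋊_θS`-bimodule.  Then the `K`-submodule `[A,M]`
generated by `{a·x − x·a : a ∈ A, x ∈ M}` is a left `KS`-submodule of `M`, and the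
map `x + [A,M] ↦ 1_A ⊗ x` is a well-defined isomorphism of left `KS`-modules
`M/[A,M] ≅ A ⊗_{A^e} M`. -/
theorem coinvariants_iso_tensor {K : Type*} [CommRing K] {S : Type*} [Monoid S]
    (I : InverseMonoidStr S) {A : Type*} [Ring A] [Algebra K A]
    (T : UnitalAction K I A) {M : Type*} [AddCommGroup M] [Module K M]
    (B : T.CrossedBimodule M) :
    -- `[A,M]` is a left `KS`-submodule of `M`
    (∀ s : S, ∀ z ∈ Submodule.span K {z : M | ∃ (a : A) (m : M), z = adL B a m - adR B a m},
      sdot B s z ∈ Submodule.span K {z : M | ∃ (a : A) (m : M), z = adL B a m - adR B a m}) ∧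
    -- `x + [A,M] ↦ 1_A ⊗ x` is a well-defined `K`-linear isomorphism
    (∃ ψ : (M ⧸ Submodule.span K {z : M | ∃ (a : A) (m : M), z = adL B a m - adR B a m})
            ≃ₗ[K] (TensorProduct K A M ⧸ relAe B),
      ∀ m : M, ψ (Submodule.Quotient.mk m) = (relAe B).mkQ ((1 : A) ⊗ₜ[K] m)) ∧
    -- it intertwines the `KS`-actions: `ψ(s·(m + [A,M])) = s·ψ(m + [A,M])`, i.e.
    -- `1_A ⊗ (s·m) = (s·1_A) ⊗ (s·m)` in `A ⊗_{A^e} M`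
    (∀ (s : S) (m : M),
      (relAe B).mkQ ((1 : A) ⊗ₜ[K] (sdot B s m))
        = (relAe B).mkQ ((T.θ s 1) ⊗ₜ[K] (sdot B s m))) := by
  classical
  set Cset : Set M := {z : M | ∃ (a : A) (m : M), z = adL B a m - adR B a m} with hCset
  have sdot_zero : ∀ s : S, sdot B s (0 : M) = 0 := by
    intro s
    have h := aux_sdot_sub B s (0 : M) 0
    simpa using h
  have sdot_add : ∀ (s : S) (u v : M), sdot B s (u + v) = sdot B s u + sdot B s v := by
    intro s u v
    have h := aux_sdot_sub B s (u + v) v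
    rw [add_sub_cancel_right] at h
    rw [h]; abel
  have sdot_smul : ∀ (s : S) (k : K) (u : M), sdot B s (k • u) = k • sdot B s u := by
    intro s k u
    unfold UnitalAction.sdot
    rw [B.l_smul_right, B.r_smul_right]
  refine ⟨?_, ?_, ?_⟩
  · -- KS-submodule
    intro s z hz
    refine Submodule.span_induction (p := fun z _ => sdot B s z ∈ Submodule.span K Cset)
      ?_ ?_ ?_ ?_ hz
    · rintro x ⟨a, m, rfl⟩
      show sdot B s (adL B a m - adR B a m) ∈ Submodule.span K Cset
      rw [aux_sdot_sub, aux_sdot_adL, aux_sdot_adR]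
      exact Submodule.subset_span ⟨T.θ s a, sdot B s m, rfl⟩
    · show sdot B s 0 ∈ Submodule.span K Cset
      rw [sdot_zero]; exact Submodule.zero_mem _
    · intro x y _ _ hx hy
      show sdot B s (x + y) ∈ Submodule.span K Cset
      rw [sdot_add]; exact Submodule.add_mem _ hx hy
    · intro k x _ hx
      show sdot B s (k • x) ∈ Submodule.span K Cset
      rw [sdot_smul]; exact Submodule.smul_mem _ k hx
  · -- the isomorphism
    set Cs : Submodule K M := Submodule.span K Cset with hCs
    let φ : M →ₗ[K] (TensorProduct K A M ⧸ relAe B) :=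
      (relAe B).mkQ.comp ((TensorProduct.mk K A M) 1)
    have hker : Cs ≤ LinearMap.ker φ := by
      rw [hCs, Submodule.span_le]
      rintro x ⟨a, m, rfl⟩
      simp only [SetLike.mem_coe, LinearMap.mem_ker, φ, LinearMap.comp_apply,
        map_sub, Submodule.mkQ_apply, TensorProduct.mk_apply]
      rw [← Submodule.Quotient.mk_sub, Submodule.Quotient.mk_eq_zero]
      rw [← TensorProduct.tmul_sub] at *
      rw [TensorProduct.tmul_sub]
      exact aux_rel_comm B a m
    let ψ0 : (M ⧸ Cs) →ₗ[K] (TensorProduct K A M ⧸ relAe B) := Cs.liftQ φ hker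
    let β : A →ₗ[K] M →ₗ[K] (M ⧸ Cs) :=
      LinearMap.mk₂ K (fun a m => Cs.mkQ (adL B a m))
        (fun a b m => show Cs.mkQ (adL B (a + b) m) = Cs.mkQ (adL B a m) + Cs.mkQ (adL B b m) by
          rw [aux_adL_add_left, map_add])
        (fun k a m => show Cs.mkQ (adL B (k • a) m) = k • Cs.mkQ (adL B a m) by
          rw [aux_adL_smul_left, map_smul])
        (fun a m m' => show Cs.mkQ (adL B a (m + m')) = Cs.mkQ (adL B a m) + Cs.mkQ (adL B a m') by
          rw [aux_adL_add_right, map_add])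
        (fun k a m => show Cs.mkQ (adL B a (k • m)) = k • Cs.mkQ (adL B a m) by
          rw [aux_adL_smul_right, map_smul])
    let τ : TensorProduct K A M →ₗ[K] (M ⧸ Cs) := TensorProduct.lift β
    have hτ : ∀ (x : A) (m : M), τ (x ⊗ₜ[K] m) = Cs.mkQ (adL B x m) := by
      intro x m
      simp [τ, β]
    have hker2 : relAe B ≤ LinearMap.ker τ := by
      rw [UnitalAction.relAe, Submodule.span_le]
      rintro z ⟨x, a, b, m, rfl⟩
      simp only [SetLike.mem_coe, LinearMap.mem_ker, map_sub, hτ]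
      rw [← map_sub, Submodule.mkQ_apply, Submodule.Quotient.mk_eq_zero]
      have h1 : adL B (b * x * a) m = adL B b (adL B (x * a) m) := by
        rw [aux_adL_mul, mul_assoc]
      have h2 : adL B x (adL B a (adR B b m)) = adR B b (adL B (x * a) m) := by
        rw [aux_adL_adR, aux_adL_adR, aux_adL_mul]
      rw [h1, h2, hCs]
      exact Submodule.subset_span ⟨b, adL B (x * a) m, rfl⟩
    let ψinv : (TensorProduct K A M ⧸ relAe B) →ₗ[K] (M ⧸ Cs) := (relAe B).liftQ τ hker2
    have hleft : ψ0.comp ψinv = LinearMap.id := by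
      apply Submodule.linearMap_qext
      apply TensorProduct.ext'
      intro x m
      simp only [LinearMap.comp_apply, Submodule.mkQ_apply, LinearMap.id_comp,
        Submodule.liftQ_apply, ψinv, ψ0, hτ]
      simp only [Submodule.mkQ_apply, Submodule.liftQ_apply, φ, LinearMap.comp_apply,
        TensorProduct.mk_apply]
      rw [Submodule.Quotient.eq]
      have h : (1 : A) ⊗ₜ[K] adL B x m - x ⊗ₜ[K] m
          = -(x ⊗ₜ[K] m - (1 : A) ⊗ₜ[K] adL B x m) := by abel
      rw [h]
      exact neg_mem (aux_rel_gen1 B x m)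
    have hright : ψinv.comp ψ0 = LinearMap.id := by
      apply Submodule.linearMap_qext
      apply LinearMap.ext
      intro m
      simp only [LinearMap.comp_apply, Submodule.mkQ_apply, LinearMap.id_apply,
        Submodule.liftQ_apply, ψ0, ψinv, φ, TensorProduct.mk_apply, hτ]
      rw [aux_adL_one]
    refine ⟨LinearEquiv.ofLinear ψ0 ψinv hleft hright, ?_⟩
    intro m
    simp only [LinearEquiv.ofLinear_apply, ψ0, Submodule.liftQ_apply, φ,
      LinearMap.comp_apply, TensorProduct.mk_apply]
  · -- intertwining
    intro s m
    rw [T.theta_e]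
    symm
    rw [Submodule.mkQ_apply, Submodule.mkQ_apply, Submodule.Quotient.eq]
    have h : T.e s ⊗ₜ[K] sdot B s m - (1 : A) ⊗ₜ[K] sdot B s m
        = (1 : A) ⊗ₜ[K] adL B (T.e s) (sdot B s m)
            - (1 : A) ⊗ₜ[K] adR B (T.e s) (sdot B s m)
          + (T.e s ⊗ₜ[K] sdot B s m - (1 : A) ⊗ₜ[K] adL B (T.e s) (sdot B s m)) := by
      rw [aux_adR_e_sdot]
      abel
    rw [h]
    exact add_mem (aux_rel_comm B _ _) (aux_rel_gen1 B _ _)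
end

section
/- Let S be an E-unitary inverse monoid acting unitally on a K-algebra A which is flat over the commutative ring K. Then for every g ∈ G(S), the ideal D_g = Σ_{s∈g} 1_s A is flat as a left and as a right A-module, being a direct limit of unital (hence projective) ideals I(T) = Σ_{t∈T} 1_t A over finite subsets T of the σ-class g. -/
/-- Flatness of a (left) module over a possibly noncommutative ring, expressed via the
standard equational criterion: whenever `Σᵢ xᵢ • mᵢ = 0`, there are `yⱼ ∈ M` and
`aᵢⱼ ∈ R` with `mᵢ = Σⱼ aᵢⱼ • yⱼ` and `Σᵢ xᵢ aᵢⱼ = 0`.  (Right modules are treated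
as left modules over the opposite ring.) -/
def ModuleFlat (R M : Type*) [Ring R] [AddCommGroup M] [Module R M] : Prop :=
  ∀ (n : ℕ) (x : Fin n → R) (m : Fin n → M), (∑ i, x i • m i) = 0 →
    ∃ (k : ℕ) (a : Fin n → Fin k → R) (y : Fin k → M),
      (∀ i, m i = ∑ j, a i j • y j) ∧ (∀ j, (∑ i, x i * a i j) = 0)


/-- Auxiliary: centrality of an element. -/
def IsCen {A : Type*} [Ring A] (f : A) : Prop := ∀ a, f * a = a * f

lemma join_props {A : Type*} [Ring A] {f₁ f₂ : A}
    (hc₁ : IsCen f₁) (hc₂ : IsCen f₂) (hi₁ : f₁ * f₁ = f₁) (hi₂ : f₂ * f₂ = f₂) :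
    IsCen (f₁ + f₂ - f₁ * f₂) ∧ (f₁ + f₂ - f₁ * f₂) * (f₁ + f₂ - f₁ * f₂) = f₁ + f₂ - f₁ * f₂ ∧
    (∀ m : A, f₁ * m = m → (f₁ + f₂ - f₁ * f₂) * m = m) ∧
    (∀ m : A, f₂ * m = m → (f₁ + f₂ - f₁ * f₂) * m = m) := by
  have hcomm : f₂ * f₁ = f₁ * f₂ := (hc₂ f₁).symm ▸ rfl
  refine ⟨?_, ?_, ?_, ?_⟩
  · intro a
    simp only [sub_mul, add_mul, mul_sub, mul_add, hc₁ a, hc₂ a]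
    rw [mul_assoc, hc₂ a, ← mul_assoc, hc₁ a, mul_assoc]
  · simp only [sub_mul, add_mul, mul_sub, mul_add]
    rw [hi₁, hi₂]
    have h1 : f₁ * (f₁ * f₂) = f₁ * f₂ := by rw [← mul_assoc, hi₁]
    have h2 : f₂ * f₁ = f₁ * f₂ := by rw [hc₂ f₁]
    have h3 : f₂ * (f₁ * f₂) = f₁ * f₂ := by rw [← mul_assoc, h2, mul_assoc, hi₂]
    have h4 : f₁ * f₂ * f₁ = f₁ * f₂ := by rw [mul_assoc, h2, ← mul_assoc, hi₁]
    have h5 : f₁ * f₂ * f₂ = f₁ * f₂ := by rw [mul_assoc, hi₂]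
    have h6 : f₁ * f₂ * (f₁ * f₂) = f₁ * f₂ := by rw [← mul_assoc, h4, mul_assoc, hi₂]
    rw [h1, h2, h3, h4, h5, h6]
    abel
  · intro m hm
    rw [sub_mul, add_mul, hm, mul_assoc]
    have h : f₁ * (f₂ * m) = f₂ * m := by rw [← mul_assoc, hc₁ f₂, mul_assoc, hm]
    rw [h]; abel
  · intro m hm
    rw [sub_mul, add_mul, hm, mul_assoc, hm]
    abel

lemma span_exists_idem {R A : Type*} [Ring A] [Ring R] [Module R A] (G : Set A)
    (hG : ∀ x ∈ G, IsCen x ∧ x * x = x)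
    (hmul : ∀ f₁ f₂, f₁ ∈ Submodule.span R G → f₂ ∈ Submodule.span R G → IsCen f₁ →
      f₁ * f₂ ∈ Submodule.span R G)
    (hsmul : ∀ (r : R) (f m : A), IsCen f → f * m = m → f * (r • m) = r • m) :
    ∀ m ∈ Submodule.span R G,
      ∃ f ∈ Submodule.span R G, IsCen f ∧ f * f = f ∧ f * m = m := by
  intro m hm
  induction hm using Submodule.span_induction with
  | mem x hx =>
    exact ⟨x, Submodule.subset_span hx, (hG x hx).1, (hG x hx).2, (hG x hx).2⟩
  | zero =>
    refine ⟨0, Submodule.zero_mem _, fun a => ?_, ?_, ?_⟩ <;> rw [zero_mul] <;> rw [mul_zero]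
  | add x y hx hy ihx ihy =>
    obtain ⟨f₁, hf₁M, hc₁, hi₁, hm₁⟩ := ihx
    obtain ⟨f₂, hf₂M, hc₂, hi₂, hm₂⟩ := ihy
    obtain ⟨hc, hi, h₁, h₂⟩ := join_props hc₁ hc₂ hi₁ hi₂
    refine ⟨f₁ + f₂ - f₁ * f₂, ?_, hc, hi, ?_⟩
    · exact Submodule.sub_mem _ (Submodule.add_mem _ hf₁M hf₂M) (hmul _ _ hf₁M hf₂M hc₁)
    · rw [mul_add, h₁ x hm₁, h₂ y hm₂]
  | smul r x hx ihx =>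
    obtain ⟨f, hfM, hc, hi, hm'⟩ := ihx
    exact ⟨f, hfM, hc, hi, hsmul r f x hc hm'⟩

lemma span_exists_idem_family {R A : Type*} [Ring A] [Ring R] [Module R A] (G : Set A)
    (hG : ∀ x ∈ G, IsCen x ∧ x * x = x)
    (hmul : ∀ f₁ f₂, f₁ ∈ Submodule.span R G → f₂ ∈ Submodule.span R G → IsCen f₁ →
      f₁ * f₂ ∈ Submodule.span R G)
    (hsmul : ∀ (r : R) (f m : A), IsCen f → f * m = m → f * (r • m) = r • m) :
    ∀ (n : ℕ) (m : Fin n → A), (∀ i, m i ∈ Submodule.span R G) →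
      ∃ f ∈ Submodule.span R G, IsCen f ∧ f * f = f ∧ ∀ i, f * m i = m i := by
  intro n
  induction n with
  | zero =>
    intro m _
    refine ⟨0, Submodule.zero_mem _, fun a => ?_, ?_, fun i => i.elim0⟩
    · rw [zero_mul, mul_zero]
    · rw [zero_mul]
  | succ k ih =>
    intro m hm
    obtain ⟨f₂, hf₂M, hc₂, hi₂, hm₂⟩ := ih (fun i => m i.succ) (fun i => hm i.succ)
    obtain ⟨f₁, hf₁M, hc₁, hi₁, hm₁⟩ := span_exists_idem G hG hmul hsmul (m 0) (hm 0)
    obtain ⟨hc, hi, h₁, h₂⟩ := join_props hc₁ hc₂ hi₁ hi₂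
    refine ⟨f₁ + f₂ - f₁ * f₂, ?_, hc, hi, fun i => ?_⟩
    · exact Submodule.sub_mem _ (Submodule.add_mem _ hf₁M hf₂M) (hmul _ _ hf₁M hf₂M hc₁)
    refine Fin.cases ?_ ?_ i
    · exact h₁ _ hm₁
    · intro j; exact h₂ _ (hm₂ j)

open UnitalAction in
/-- Let `S` be an `E`-unitary inverse monoid acting unitally on a
`K`-algebra `A` which is flat over the commutative ring `K`.  Then for every
`g ∈ G(S)` (a σ-class, represented by `t ∈ S`), the ideal `D_g = Σ_{s∈g} 1_s A`
is flat as a left and as a right `A`-module. -/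
theorem Dsub_flat {K : Type*} [CommRing K] {S : Type*} [Monoid S]
    (I : InverseMonoidStr S) {A : Type*} [Ring A] [Algebra K A]
    (T : UnitalAction K I A) (hE : EUnitary S) (hflat : ModuleFlat K A) :
    ∀ t : S,
      ModuleFlat A
        ↥(Submodule.span A {x : A | ∃ s : S, sigmaRel s t ∧ x = T.e s}) ∧
      ModuleFlat Aᵐᵒᵖ
        ↥(Submodule.span Aᵐᵒᵖ {x : A | ∃ s : S, sigmaRel s t ∧ x = T.e s}) := by
  intro t
  set G : Set A := {x : A | ∃ s : S, sigmaRel s t ∧ x = T.e s} with hGdef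
  have hG : ∀ x ∈ G, IsCen x ∧ x * x = x := by
    rintro x ⟨s, _, rfl⟩
    exact ⟨fun a => T.e_central s a, T.e_idem s⟩
  constructor
  · -- left module
    have hmul : ∀ f₁ f₂, f₁ ∈ Submodule.span A G → f₂ ∈ Submodule.span A G → IsCen f₁ →
        f₁ * f₂ ∈ Submodule.span A G := fun f₁ f₂ _ h₂ _ => Submodule.smul_mem _ f₁ h₂
    have hsmul : ∀ (r : A) (f m : A), IsCen f → f * m = m → f * (r • m) = r • m := by
      intro r f m hc hm
      show f * (r * m) = r * m
      rw [← mul_assoc, hc r, mul_assoc, hm]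
    intro n x m hsum
    obtain ⟨f, hfM, hc, hi, hfm⟩ := span_exists_idem_family (R := A) G hG hmul hsmul n
      (fun i => (m i : A)) (fun i => (m i).2)
    have hsum' : (∑ i, x i * (m i : A)) = 0 := by
      have := congrArg (Subtype.val) hsum
      simpa using this
    refine ⟨1, fun i _ => (m i : A), fun _ => ⟨f, hfM⟩, fun i => ?_, fun j => ?_⟩
    · apply Subtype.ext
      rw [Fin.sum_univ_one]
      show (m i : A) = (m i : A) * f
      rw [← hc, hfm i]
    · simpa using hsum'
  · -- right module
    have hmul : ∀ f₁ f₂, f₁ ∈ Submodule.span Aᵐᵒᵖ G → f₂ ∈ Submodule.span Aᵐᵒᵖ G → IsCen f₁ →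
        f₁ * f₂ ∈ Submodule.span Aᵐᵒᵖ G := by
      intro f₁ f₂ h₁ _ hc
      rw [← op_smul_eq_mul]
      exact Submodule.smul_mem _ _ h₁
    have hsmul : ∀ (r : Aᵐᵒᵖ) (f m : A), IsCen f → f * m = m → f * (r • m) = r • m := by
      intro r f m _ hm
      show f * (m * r.unop) = m * r.unop
      rw [← mul_assoc, hm]
    intro n x m hsum
    obtain ⟨f, hfM, hc, hi, hfm⟩ := span_exists_idem_family (R := Aᵐᵒᵖ) G hG hmul hsmul n
      (fun i => (m i : A)) (fun i => (m i).2)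
    have hsum' : (∑ i, (m i : A) * (x i).unop) = 0 := by
      have := congrArg (Subtype.val) hsum
      simpa using this
    refine ⟨1, fun i _ => MulOpposite.op (m i : A), fun _ => ⟨f, hfM⟩, fun i => ?_, fun j => ?_⟩
    · apply Subtype.ext
      rw [Fin.sum_univ_one]
      show (m i : A) = f * (m i : A)
      rw [hfm i]
    · apply MulOpposite.unop_injective
      rw [Finset.unop_sum]
      simpa [MulOpposite.unop_mul] using hsum'
end
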